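/- arXiv:1608.04153 — 11 statements merged into one kernel-verified Lean document; each statement's English description precedes it below -/
import Mathlib

section
/- If $S \subseteq [n]^3$ is a slice-increasing set and $T \subseteq S$ is a subset such that no two distinct points $p, q \in T$ with $p \neq q$ satisfy: $q - p$ has strictly positive first and second coordinates and weakly nonpositive third coordinate (i.e., $T$ avoids difference-type $(+,+,\leq 0)$), then $|T| \leq n$. -/
/-- A finite set `S ⊆ ℤ³` is slice-increasing: the coordinate-wise difference of
any two distinct triples has at least two nonzero coordinates of the same sign. -/
def SliceIncZ (S : Finset (ℤ × ℤ × ℤ)) : Prop :=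
  ∀ p ∈ S, ∀ q ∈ S, p ≠ q →
    (p.1 < q.1 ∧ p.2.1 < q.2.1) ∨ (p.1 < q.1 ∧ p.2.2 < q.2.2) ∨
    (p.2.1 < q.2.1 ∧ p.2.2 < q.2.2) ∨
    (q.1 < p.1 ∧ q.2.1 < p.2.1) ∨ (q.1 < p.1 ∧ q.2.2 < p.2.2) ∨
    (q.2.1 < p.2.1 ∧ q.2.2 < p.2.2)

/-- `S ⊆ [n]³` where `[n] = {1, …, n}`. -/
def InCube (n : ℕ) (S : Finset (ℤ × ℤ × ℤ)) : Prop :=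
  ∀ p ∈ S, (1 ≤ p.1 ∧ p.1 ≤ n) ∧ (1 ≤ p.2.1 ∧ p.2.1 ≤ n) ∧ (1 ≤ p.2.2 ∧ p.2.2 ≤ n)

theorem stmt_1 (n : ℕ) (S T : Finset (ℤ × ℤ × ℤ))
    (hSn : InCube n S) (hS : SliceIncZ S) (hTS : T ⊆ S)
    (hT : ∀ p ∈ T, ∀ q ∈ T,
      ¬(p.1 < q.1 ∧ p.2.1 < q.2.1 ∧ q.2.2 ≤ p.2.2)) :
    T.card ≤ n := by
  have hinj : Set.InjOn (fun p : ℤ × ℤ × ℤ => p.2.2) T := by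
    intro p hp q hq h
    by_contra hne
    have := hS p (hTS hp) q (hTS hq) hne
    simp only at h
    rcases this with ⟨h1, h2⟩ | ⟨h1, h2⟩ | ⟨h1, h2⟩ | ⟨h1, h2⟩ | ⟨h1, h2⟩ | ⟨h1, h2⟩
    · exact hT p hp q hq ⟨h1, h2, h.ge⟩
    · omega
    · omega
    · exact hT q hq p hp ⟨h1, h2, h.le⟩
    · omega
    · omega
  have hmap : ∀ p ∈ T, p.2.2 ∈ Finset.Icc (1:ℤ) n := by
    intro p hp
    have := (hSn p (hTS hp)).2.2
    exact Finset.mem_Icc.mpr this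
  calc T.card ≤ (Finset.Icc (1:ℤ) n).card :=
        Finset.card_le_card_of_injOn _ hmap hinj
    _ = n := by rw [Int.card_Icc]; omega
end

section
/- If $S \subseteq [n]^3$ is a slice-increasing set and $T \subseteq S$ is a subset avoiding difference-type $(+,+,+)$ (i.e., there are no two points $p, q \in T$ with $q$ strictly greater than $p$ in all three coordinates), then $|T| \leq 3n$. -/
private lemma aux_slice (N : ℕ) : ∀ (T : Finset (ℤ × ℤ × ℤ)), T.card ≤ N →
    (∀ p ∈ T, ∀ q ∈ T, p ≠ q →
      (p.1 < q.1 ∧ p.2.1 < q.2.1) ∨ (p.1 < q.1 ∧ p.2.2 < q.2.2) ∨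
      (p.2.1 < q.2.1 ∧ p.2.2 < q.2.2) ∨
      (q.1 < p.1 ∧ q.2.1 < p.2.1) ∨ (q.1 < p.1 ∧ q.2.2 < p.2.2) ∨
      (q.2.1 < p.2.1 ∧ q.2.2 < p.2.2)) →
    (∀ p ∈ T, ∀ q ∈ T, ¬(p.1 < q.1 ∧ p.2.1 < q.2.1 ∧ p.2.2 < q.2.2)) →
    T.card ≤ (T.image Prod.fst).card + (T.image (fun p => p.2.2)).card := by
  induction N with
  | zero =>
    intro T hc _ _
    omega
  | succ N ih =>
    intro T hc hA hB
    rcases T.eq_empty_or_nonempty with rfl | hne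
    · simp
    -- the fiber of the maximal third coordinate
    have hne3 : (T.image (fun p => p.2.2)).Nonempty := hne.image _
    set M3 := (T.image (fun p => p.2.2)).max' hne3 with hM3def
    have hle3 : ∀ p ∈ T, p.2.2 ≤ M3 := fun p hp =>
      Finset.le_max' (T.image (fun p => p.2.2)) p.2.2 (Finset.mem_image_of_mem _ hp)
    set F : Finset (ℤ × ℤ × ℤ) := T.filter (fun p => p.2.2 = M3) with hFdef
    have hFne : F.Nonempty := by
      obtain ⟨v, hv⟩ := (T.image (fun p => p.2.2)).max'_mem hne3 |> Finset.mem_image.mp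
      exact ⟨v, Finset.mem_filter.mpr ⟨hv.1, hv.2⟩⟩
    have hFne1 : (F.image Prod.fst).Nonempty := hFne.image _
    -- b : the element of F with minimal first coordinate
    obtain ⟨b, hbF, hb1⟩ : ∃ b ∈ F, b.1 = (F.image Prod.fst).min' hFne1 := by
      obtain ⟨b, hb, hb1⟩ := Finset.mem_image.mp ((F.image Prod.fst).min'_mem hFne1)
      exact ⟨b, hb, hb1⟩
    have hbT : b ∈ T := (Finset.mem_filter.mp hbF).1
    have hb3 : b.2.2 = M3 := (Finset.mem_filter.mp hbF).2
    have hb1min : ∀ p ∈ T, p.2.2 = M3 → b.1 ≤ p.1 := by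
      intro p hp hp3
      rw [hb1]
      exact Finset.min'_le _ _ (Finset.mem_image_of_mem _ (Finset.mem_filter.mpr ⟨hp, hp3⟩))
    -- key dichotomy
    have key : (∀ q ∈ T, q ≠ b → q.2.2 ≠ b.2.2) ∨ (∀ q ∈ T, q ≠ b → q.1 ≠ b.1) := by
      by_cases hq : ∃ q ∈ T, q ≠ b ∧ q.1 = b.1
      · left
        obtain ⟨q, hqT, hqb, hq1⟩ := hq
        -- from slice on (b, q): q.2.1 < b.2.1 and q.2.2 < b.2.2
        have hq23 : q.2.1 < b.2.1 ∧ q.2.2 < b.2.2 := by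
          have hqle := hle3 q hqT
          rcases hA b hbT q hqT (Ne.symm hqb) with h | h | h | h | h | h
          · exact absurd h.1 (by omega)
          · exact absurd h.1 (by omega)
          · exact absurd h.2 (by omega)
          · exact absurd h.1 (by omega)
          · exact absurd h.1 (by omega)
          · exact h
        intro t htT htb h3eq
        have htF : t ∈ F := Finset.mem_filter.mpr ⟨htT, by rw [h3eq, hb3]⟩
        have hbt1 : b.1 ≤ t.1 := hb1min t htT (by rw [h3eq, hb3])
        -- from slice on (b, t): b.1 < t.1 and b.2.1 < t.2.1
        have hbt : b.1 < t.1 ∧ b.2.1 < t.2.1 := by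
          rcases hA b hbT t htT (Ne.symm htb) with h | h | h | h | h | h
          · exact h
          · exact absurd h.2 (by omega)
          · exact absurd h.2 (by omega)
          · exact absurd h.1 (by omega)
          · exact absurd h.2 (by omega)
          · exact absurd h.2 (by omega)
        -- now q → t is (+,+,+)
        exact hB q hqT t htT ⟨by omega, by omega, by omega⟩
      · right
        push_neg at hq
        intro r hrT hrb
        exact hq r hrT hrb
    -- inductive step : erase b
    set T' : Finset (ℤ × ℤ × ℤ) := T.erase b with hT'def
    have hT'sub : T' ⊆ T := Finset.erase_subset _ _
    have hcard' : T'.card = T.card - 1 := Finset.card_erase_of_mem hbT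
    have hcardpos : 1 ≤ T.card := Finset.card_pos.mpr hne
    have hIH : T'.card ≤ (T'.image Prod.fst).card + (T'.image (fun p => p.2.2)).card := by
      refine ih T' (by omega) ?_ ?_
      · intro p hp q hq hpq
        exact hA p (hT'sub hp) q (hT'sub hq) hpq
      · intro p hp q hq
        exact hB p (hT'sub hp) q (hT'sub hq)
    have himg1sub : T'.image Prod.fst ⊆ T.image Prod.fst :=
      Finset.image_subset_image hT'sub
    have himg3sub : T'.image (fun p => p.2.2) ⊆ T.image (fun p => p.2.2) :=
      Finset.image_subset_image hT'sub
    have hb1mem : b.1 ∈ T.image Prod.fst := Finset.mem_image_of_mem _ hbT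
    have hb3mem : b.2.2 ∈ T.image (fun p => p.2.2) := Finset.mem_image_of_mem _ hbT
    rcases key with hkey | hkey
    · -- third coordinate of b unique
      have hsub : T'.image (fun p => p.2.2) ⊆ (T.image (fun p => p.2.2)).erase b.2.2 := by
        intro v hv
        obtain ⟨r, hrT', rfl⟩ := Finset.mem_image.mp hv
        have hrT : r ∈ T := hT'sub hrT'
        have hrb : r ≠ b := Finset.ne_of_mem_erase hrT'
        exact Finset.mem_erase.mpr ⟨hkey r hrT hrb, Finset.mem_image_of_mem _ hrT⟩
      have h1 : (T'.image (fun p => p.2.2)).card ≤ (T.image (fun p => p.2.2)).card - 1 := by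
        have := Finset.card_le_card hsub
        rwa [Finset.card_erase_of_mem hb3mem] at this
      have h2 : (T'.image Prod.fst).card ≤ (T.image Prod.fst).card :=
        Finset.card_le_card himg1sub
      have h3 : 1 ≤ (T.image (fun p => p.2.2)).card := Finset.card_pos.mpr ⟨_, hb3mem⟩
      omega
    · -- first coordinate of b unique
      have hsub : T'.image Prod.fst ⊆ (T.image Prod.fst).erase b.1 := by
        intro v hv
        obtain ⟨r, hrT', rfl⟩ := Finset.mem_image.mp hv
        have hrT : r ∈ T := hT'sub hrT'
        have hrb : r ≠ b := Finset.ne_of_mem_erase hrT'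
        exact Finset.mem_erase.mpr ⟨hkey r hrT hrb, Finset.mem_image_of_mem _ hrT⟩
      have h1 : (T'.image Prod.fst).card ≤ (T.image Prod.fst).card - 1 := by
        have := Finset.card_le_card hsub
        rwa [Finset.card_erase_of_mem hb1mem] at this
      have h2 : (T'.image (fun p => p.2.2)).card ≤ (T.image (fun p => p.2.2)).card :=
        Finset.card_le_card himg3sub
      have h3 : 1 ≤ (T.image Prod.fst).card := Finset.card_pos.mpr ⟨_, hb1mem⟩
      omega

theorem stmt_2 (n : ℕ) (S T : Finset (ℤ × ℤ × ℤ))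
    (hSn : InCube n S) (hS : SliceIncZ S) (hTS : T ⊆ S)
    (hT : ∀ p ∈ T, ∀ q ∈ T,
      ¬(p.1 < q.1 ∧ p.2.1 < q.2.1 ∧ p.2.2 < q.2.2)) :
    T.card ≤ 3 * n := by
  have hmain := aux_slice T.card T le_rfl
    (fun p hp q hq hpq => hS p (hTS hp) q (hTS hq) hpq) hT
  have h1 : T.image Prod.fst ⊆ Finset.Icc (1 : ℤ) n := by
    intro v hv
    obtain ⟨p, hp, rfl⟩ := Finset.mem_image.mp hv
    have := hSn p (hTS hp)
    exact Finset.mem_Icc.mpr ⟨this.1.1, this.1.2⟩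
  have h3 : T.image (fun p => p.2.2) ⊆ Finset.Icc (1 : ℤ) n := by
    intro v hv
    obtain ⟨p, hp, rfl⟩ := Finset.mem_image.mp hv
    have := hSn p (hTS hp)
    exact Finset.mem_Icc.mpr ⟨this.2.2.1, this.2.2.2⟩
  have hIcc : (Finset.Icc (1 : ℤ) (n : ℤ)).card = n := by
    rw [Int.card_Icc]
    simp
  have c1 : (T.image Prod.fst).card ≤ n := hIcc ▸ Finset.card_le_card h1
  have c3 : (T.image (fun p => p.2.2)).card ≤ n := hIcc ▸ Finset.card_le_card h3
  omega
end

section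
/- Let $x_1, \dots, x_n$ be distinct real numbers. Then there exists a set of indices $i_1 < i_2 < \dots < i_k$ such that the subsequence $x_{i_1}, \dots, x_{i_k}$ is monotone (either increasing or decreasing) and $\sum_{j=1}^k x_{i_j} \geq \left( \sum_{i=1}^n \max(x_i, 0)^2 \right)^{1/2}$, where the empty sum is taken to be $0$. -/
/-!
Let `aᵢ` be the largest sum of an increasing subsequence ending at `xᵢ` and `bᵢ` the largest
sum of a decreasing subsequence starting at `xᵢ`. For `i < j`, `xᵢ < xⱼ` forces
`aᵢ + xⱼ ≤ aⱼ` and `xⱼ < xᵢ` forces `bⱼ + xᵢ ≤ bᵢ`, so the squares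
`(aᵢ - xᵢ, aᵢ] × (bᵢ - xᵢ, bᵢ]` with `xᵢ > 0` are pairwise disjoint. They lie in `[0, M]²`,
where `M` is the largest sum of a monotone subsequence, and comparing areas gives
`∑ max(xᵢ, 0)² ≤ M²`.
-/

open Finset Function MeasureTheory

theorem Finset.sum_orderEmbOfFin {ι M : Type*} [LinearOrder ι] [AddCommMonoid M]
    (s : Finset ι) (f : ι → M) : ∑ j, f (s.orderEmbOfFin rfl j) = ∑ i ∈ s, f i := by
  conv_rhs => rw [← map_orderEmbOfFin_univ s rfl, sum_map]
  rfl

theorem sum_sq_le_mul_of_pairwiseDisjoint {ι : Type*} {s : Finset ι} {x a b : ι → ℝ} {A B : ℝ}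
    (hx : ∀ i ∈ s, 0 ≤ x i) (hxa : ∀ i ∈ s, x i ≤ a i) (hxb : ∀ i ∈ s, x i ≤ b i)
    (haA : ∀ i ∈ s, a i ≤ A) (hbB : ∀ i ∈ s, b i ≤ B) (hA : 0 ≤ A) (hB : 0 ≤ B)
    (hd : (s : Set ι).PairwiseDisjoint
      fun i => Set.Ioc (a i - x i) (a i) ×ˢ Set.Ioc (b i - x i) (b i)) :
    ∑ i ∈ s, x i ^ 2 ≤ A * B := by
  have hsub : (⋃ i ∈ s, Set.Ioc (a i - x i) (a i) ×ˢ Set.Ioc (b i - x i) (b i)) ⊆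
      Set.Ioc 0 A ×ˢ Set.Ioc 0 B := by
    refine Set.iUnion₂_subset fun i hi => Set.prod_mono ?_ ?_
    · exact Set.Ioc_subset_Ioc (by linarith [hxa i hi]) (haA i hi)
    · exact Set.Ioc_subset_Ioc (by linarith [hxb i hi]) (hbB i hi)
  have hvol := measure_mono (μ := volume) hsub
  rw [measure_biUnion_finset hd fun i _ => measurableSet_Ioc.prod measurableSet_Ioc] at hvol
  simp only [Measure.volume_eq_prod, Measure.prod_prod, Real.volume_Ioc, sub_sub_cancel,
    sub_zero, ← ENNReal.ofReal_mul hA] at hvol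
  rw [← sum_congr rfl fun i hi => ENNReal.ofReal_mul (hx i hi),
    ← ENNReal.ofReal_sum_of_nonneg fun i hi => mul_nonneg (hx i hi) (hx i hi)] at hvol
  simpa only [sq] using (ENNReal.ofReal_le_ofReal_iff (mul_nonneg hA hB)).1 hvol

section Chains

variable {ι : Type*} [LinearOrder ι] [Fintype ι]

open Classical in
noncomputable def incChainsEndingAt (x : ι → ℝ) (i : ι) : Finset (Finset ι) :=
  {s | i ∈ s ∧ (∀ j ∈ s, j ≤ i) ∧ StrictMonoOn x s}

theorem singleton_mem_incChainsEndingAt (x : ι → ℝ) (i : ι) :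
    {i} ∈ incChainsEndingAt x i := by
  simp [incChainsEndingAt]

noncomputable def maxIncSum (x : ι → ℝ) (i : ι) : ℝ :=
  (incChainsEndingAt x i).sup' ⟨_, singleton_mem_incChainsEndingAt x i⟩ fun s => ∑ j ∈ s, x j

/-- Decreasing chains starting at `i` are the increasing chains ending at `i` for the reversed
order on the indices. -/
noncomputable def maxDecSum (x : ι → ℝ) (i : ι) : ℝ :=
  maxIncSum (ι := ιᵒᵈ) (x ∘ OrderDual.ofDual) (OrderDual.toDual i)

def chainSquare (x : ι → ℝ) (i : ι) : Set (ℝ × ℝ) :=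
  Set.Ioc (maxIncSum x i - x i) (maxIncSum x i) ×ˢ Set.Ioc (maxDecSum x i - x i) (maxDecSum x i)

variable {x : ι → ℝ}

theorem le_maxIncSum (i : ι) : x i ≤ maxIncSum x i := by
  simpa [maxIncSum] using
    le_sup' (fun s => ∑ j ∈ s, x j) (singleton_mem_incChainsEndingAt x i)

theorem maxIncSum_add_le {i j : ι} (hij : i < j) (hx : x i < x j) :
    maxIncSum x i + x j ≤ maxIncSum x j := by
  classical
  obtain ⟨s, hs, hsum⟩ := exists_mem_eq_sup' ⟨_, singleton_mem_incChainsEndingAt x i⟩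
    fun s => ∑ j ∈ s, x j
  simp only [incChainsEndingAt, mem_filter, mem_univ, true_and] at hs
  obtain ⟨his, hle, hmono⟩ := hs
  have hj : j ∉ s := fun h => (hle j h).not_gt hij
  have hle' : ∀ k ∈ s, k ≤ j := fun k hk => (hle k hk).trans hij.le
  have hext : insert j s ∈ incChainsEndingAt x j := by
    simp only [incChainsEndingAt, mem_filter, mem_univ, true_and, coe_insert]
    refine ⟨mem_insert_self j s, (forall_mem_insert _ _ _).2 ⟨le_rfl, hle'⟩, ?_⟩
    exact (strictMonoOn_insert_iff_of_forall_le hle').2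
      ⟨fun k hk _ => (hmono.monotoneOn hk his (hle k hk)).trans_lt hx, hmono⟩
  calc maxIncSum x i + x j = ∑ k ∈ insert j s, x k := by
        rw [sum_insert hj, maxIncSum, hsum, add_comm]
    _ ≤ maxIncSum x j := le_sup' (fun s => ∑ k ∈ s, x k) hext

theorem maxIncSum_le {M : ℝ} (hM : ∀ s : Finset ι, StrictMonoOn x s → ∑ i ∈ s, x i ≤ M)
    (i : ι) : maxIncSum x i ≤ M :=
  sup'_le _ _ fun s hs => hM s (mem_filter.1 hs).2.2.2

theorem le_maxDecSum (i : ι) : x i ≤ maxDecSum x i :=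
  le_maxIncSum (ι := ιᵒᵈ) _

theorem maxDecSum_add_le {i j : ι} (hij : i < j) (hx : x j < x i) :
    maxDecSum x j + x i ≤ maxDecSum x i :=
  maxIncSum_add_le (ι := ιᵒᵈ) (x := x ∘ OrderDual.ofDual) hij hx

theorem maxDecSum_le {M : ℝ} (hM : ∀ s : Finset ι, StrictAntiOn x s → ∑ i ∈ s, x i ≤ M)
    (i : ι) : maxDecSum x i ≤ M :=
  maxIncSum_le (ι := ιᵒᵈ) (fun s hs => hM s hs.dual_left) _

theorem pairwise_disjoint_chainSquare (hx : Injective x) :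
    Pairwise (Disjoint on chainSquare x) := by
  refine (pairwise_disjoint_on _).2 fun i j hij => Set.disjoint_prod.2 ?_
  rcases (hx.ne hij.ne).lt_or_gt with hx' | hx'
  · exact Or.inl <| Set.Ioc_disjoint_Ioc_of_le <| by linarith [maxIncSum_add_le hij hx']
  · exact Or.inr <| (Set.Ioc_disjoint_Ioc_of_le <| by linarith [maxDecSum_add_le hij hx']).symm

theorem sqrt_sum_max_zero_sq_le (hx : Injective x) {M : ℝ}
    (hM : ∀ s : Finset ι, StrictMonoOn x s ∨ StrictAntiOn x s → ∑ i ∈ s, x i ≤ M) :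
    √(∑ i, max (x i) 0 ^ 2) ≤ M := by
  classical
  have hM0 : 0 ≤ M := by simpa using hM ∅ (Or.inl <| Set.Subsingleton.strictMonoOn x (by simp))
  have hinc := maxIncSum_le fun s hs => hM s (Or.inl hs)
  have hdec := maxDecSum_le fun s hs => hM s (Or.inr hs)
  refine (Real.sqrt_le_left hM0).2 ?_
  calc ∑ i, max (x i) 0 ^ 2 = ∑ i with 0 < x i, x i ^ 2 := by
        rw [sum_filter]
        refine sum_congr rfl fun i _ => ?_
        split_ifs with h
        · rw [max_eq_left h.le]
        · rw [max_eq_right (not_lt.1 h), sq, zero_mul]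
    _ ≤ M * M := sum_sq_le_mul_of_pairwiseDisjoint (fun i hi => (mem_filter.1 hi).2.le)
        (fun i _ => le_maxIncSum i) (fun i _ => le_maxDecSum i) (fun i _ => hinc i)
        (fun i _ => hdec i) hM0 hM0 ((pairwise_disjoint_chainSquare hx).pairwiseDisjoint _)
    _ = M ^ 2 := (sq M).symm

end Chains

theorem stmt_3 (n : ℕ) (x : Fin n → ℝ) (hx : Function.Injective x) :
    ∃ (k : ℕ) (i : Fin k → Fin n), StrictMono i ∧
      (StrictMono (x ∘ i) ∨ StrictAnti (x ∘ i)) ∧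
      Real.sqrt (∑ t : Fin n, max (x t) 0 ^ 2) ≤ ∑ j : Fin k, x (i j) := by
  classical
  obtain ⟨s, hs, hmax⟩ := exists_max_image
    {s : Finset (Fin n) | StrictMonoOn x s ∨ StrictAntiOn x s} (fun s => ∑ i ∈ s, x i)
    ⟨∅, by simp [Set.subsingleton_empty.strictMonoOn]⟩
  simp only [mem_filter, mem_univ, true_and] at hs hmax
  set e := s.orderEmbOfFin rfl
  have he : Set.MapsTo e Set.univ s := fun j _ => orderEmbOfFin_mem s rfl j
  refine ⟨s.card, e, e.strictMono, ?_, ?_⟩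
  · rcases hs with h | h
    · exact Or.inl <| strictMonoOn_univ.1 <| h.comp (e.strictMono.strictMonoOn _) he
    · exact Or.inr <| strictAntiOn_univ.1 <| h.comp_strictMonoOn (e.strictMono.strictMonoOn _) he
  · rw [sum_orderEmbOfFin]
    exact sqrt_sum_max_zero_sq_le hx hmax
end

section
/- Weighted Erdős–Szekeres: Let $x_1, \dots, x_M$ be a sequence of distinct real numbers, and let $B_1, \dots, B_M$ and $R_1, \dots, R_M$ be nonnegative reals. Let $B$ be the maximum of $\sum_{i \in P} B_i$ over all index sets $P = \{i_1 < \dots < i_k\}$ with $x_{i_1} < \dots < x_{i_k}$ (increasing subsequences), and let $R$ be the maximum of $\sum_{j \in Q} R_j$ over all index sets $Q = \{j_1 < \dots < j_l\}$ with $x_{j_1} > \dots > x_{j_l}$ (decreasing subsequences). Then $B \cdot R \geq \sum_{i=1}^M B_i \cdot R_i$. -/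
open MeasureTheory

theorem aux_best (M : ℕ) (y : Fin M → ℝ) (w : Fin M → ℝ) (hw : ∀ i, 0 ≤ w i) (B : ℝ)
    (hub : ∀ P : Finset (Fin M), (∀ a ∈ P, ∀ c ∈ P, a < c → y a < y c) → ∑ j ∈ P, w j ≤ B) :
    ∃ b : Fin M → ℝ, (∀ i, w i ≤ b i) ∧ (∀ i, b i ≤ B) ∧
      ∀ i j, i < j → y i < y j → b i + w j ≤ b j := by
  classical
  set bset : Fin M → Finset ℝ := fun i =>
    (Finset.univ.filter (fun P : Finset (Fin M) =>
      i ∈ P ∧ (∀ j ∈ P, j ≤ i) ∧ (∀ a ∈ P, ∀ c ∈ P, a < c → y a < y c))).image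
      (fun P => ∑ j ∈ P, w j) with hbset
  have hbne : ∀ i, (bset i).Nonempty := by
    intro i
    refine ⟨w i, ?_⟩
    simp only [hbset, Finset.mem_image, Finset.mem_filter, Finset.mem_univ, true_and]
    exact ⟨{i}, ⟨by simp, by simp, by simp⟩, by simp⟩
  refine ⟨fun i => (bset i).max' (hbne i), ?_, ?_, ?_⟩
  · intro i
    apply Finset.le_max'
    simp only [hbset, Finset.mem_image, Finset.mem_filter, Finset.mem_univ, true_and]
    exact ⟨{i}, ⟨by simp, by simp, by simp⟩, by simp⟩
  · intro i
    apply Finset.max'_le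
    intro s hs
    simp only [hbset, Finset.mem_image, Finset.mem_filter, Finset.mem_univ, true_and] at hs
    obtain ⟨P, ⟨_, _, hchain⟩, rfl⟩ := hs
    exact hub P hchain
  · intro i j hij hy
    have hmem := (bset i).max'_mem (hbne i)
    simp only [hbset, Finset.mem_image, Finset.mem_filter, Finset.mem_univ, true_and] at hmem
    obtain ⟨P, ⟨hiP, hle, hchain⟩, hsum⟩ := hmem
    have hjP : j ∉ P := fun h => absurd (hle j h) (not_le.mpr hij)
    apply Finset.le_max'
    simp only [hbset, Finset.mem_image, Finset.mem_filter, Finset.mem_univ, true_and]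
    refine ⟨insert j P, ⟨Finset.mem_insert_self _ _, ?_, ?_⟩, ?_⟩
    · intro k hk
      rcases Finset.mem_insert.mp hk with rfl | hk
      · exact le_refl _
      · exact (hle k hk).trans hij.le
    · intro a ha c hc hac
      rcases Finset.mem_insert.mp ha with rfl | ha'
      · rcases Finset.mem_insert.mp hc with rfl | hc'
        · exact absurd hac (lt_irrefl _)
        · exact absurd ((hle c hc').trans_lt hij) (not_lt.mpr hac.le)
      · rcases Finset.mem_insert.mp hc with rfl | hc'
        · rcases eq_or_lt_of_le (hle a ha') with h | h
          · rw [h]; exact hy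
          · exact (hchain a ha' i hiP h).trans hy
        · exact hchain a ha' c hc' hac
    · rw [Finset.sum_insert hjP, hsum]; ring

theorem stmt_4 (M : ℕ) (x : Fin M → ℝ) (hx : Function.Injective x)
    (Bw Rw : Fin M → ℝ) (hBw : ∀ i, 0 ≤ Bw i) (hRw : ∀ i, 0 ≤ Rw i)
    (B R : ℝ)
    (hB : IsGreatest {s : ℝ | ∃ P : Finset (Fin M),
      (∀ i ∈ P, ∀ j ∈ P, i < j → x i < x j) ∧ s = ∑ i ∈ P, Bw i} B)
    (hR : IsGreatest {s : ℝ | ∃ Q : Finset (Fin M),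
      (∀ i ∈ Q, ∀ j ∈ Q, i < j → x j < x i) ∧ s = ∑ j ∈ Q, Rw j} R) :
    ∑ i : Fin M, Bw i * Rw i ≤ B * R := by
  classical
  have hB0 : 0 ≤ B := hB.2 ⟨∅, by simp, by simp⟩
  have hR0 : 0 ≤ R := hR.2 ⟨∅, by simp, by simp⟩
  obtain ⟨b, hbw, hbB, hbstep⟩ := aux_best M x Bw hBw B
    (fun P hP => hB.2 ⟨P, hP, rfl⟩)
  obtain ⟨r, hrw, hrR, hrstep⟩ := aux_best M (fun i => -x i) Rw hRw R
    (fun Q hQ => hR.2 ⟨Q, fun a ha c hc hac => by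
      simpa using hQ a ha c hc hac, rfl⟩)
  set S : Fin M → Set (ℝ × ℝ) := fun i =>
    Set.Ioc (b i - Bw i) (b i) ×ˢ Set.Ioc (r i - Rw i) (r i) with hS
  have hSmeas : ∀ i, MeasurableSet (S i) := fun i => measurableSet_Ioc.prod measurableSet_Ioc
  have key : ∀ i j, i < j → Disjoint (S i) (S j) := by
    intro i j hij
    have hxne : x i ≠ x j := hx.ne (Fin.ne_of_lt hij)
    rw [Set.disjoint_left]
    rintro ⟨p, q⟩ hpi hpj
    simp only [hS, Set.mem_prod, Set.mem_Ioc] at hpi hpj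
    rcases lt_or_gt_of_ne hxne with h | h
    · have := hbstep i j hij h
      linarith [hpi.1.2, hpj.1.1]
    · have := hrstep i j hij (by simpa using h)
      linarith [hpi.2.2, hpj.2.1]
  have hdisj : (↑(Finset.univ : Finset (Fin M)) : Set (Fin M)).PairwiseDisjoint S := by
    intro i _ j _ hij
    rcases lt_or_gt_of_ne hij with h | h
    · exact key i j h
    · exact (key j i h).symm
  have hsub : ∀ i, S i ⊆ Set.Ioc 0 B ×ˢ Set.Ioc 0 R := by
    rintro i ⟨p, q⟩ hp
    simp only [hS, Set.mem_prod, Set.mem_Ioc] at hp ⊢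
    have h1 := hbw i; have h2 := hrw i; have h3 := hBw i; have h4 := hRw i
    exact ⟨⟨by linarith [hp.1.1], hp.1.2.trans (hbB i)⟩,
      ⟨by linarith [hp.2.1], hp.2.2.trans (hrR i)⟩⟩
  have vol : ∀ i, volume (S i) = ENNReal.ofReal (Bw i * Rw i) := by
    intro i
    rw [hS]
    simp only [Measure.volume_eq_prod, Measure.prod_prod, Real.volume_Ioc]
    rw [← ENNReal.ofReal_mul (by linarith [hBw i])]
    ring_nf
  have big : ∑ i : Fin M, volume (S i) ≤ ENNReal.ofReal B * ENNReal.ofReal R := by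
    rw [← measure_biUnion_finset hdisj (fun i _ => hSmeas i)]
    refine le_trans (measure_mono (Set.iUnion₂_subset fun i _ => hsub i)) ?_
    rw [Measure.volume_eq_prod, Measure.prod_prod, Real.volume_Ioc, Real.volume_Ioc]
    simp
  have final : ENNReal.ofReal (∑ i : Fin M, Bw i * Rw i) ≤ ENNReal.ofReal (B * R) := by
    rw [ENNReal.ofReal_sum_of_nonneg (fun i _ => mul_nonneg (hBw i) (hRw i)),
      ENNReal.ofReal_mul hB0]
    calc ∑ i : Fin M, ENNReal.ofReal (Bw i * Rw i) = ∑ i : Fin M, volume (S i) := by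
          simp [vol]
      _ ≤ _ := big
  exact (ENNReal.ofReal_le_ofReal_iff (mul_nonneg hB0 hR0)).mp final
end

section
/- Let $S_1 \subseteq [\ell_1] \times [m_1] \times [n_1]$ and $S_2 \subseteq [\ell_2] \times [m_2] \times [n_2]$ be slice-increasing sets. Define the lexicographic product $S_1 \otimes S_2 \subseteq [\ell_1\ell_2] \times [m_1m_2] \times [n_1n_2]$ as the set of triples $(\ell_2(x_1-1)+x_2, m_2(y_1-1)+y_2, n_2(z_1-1)+z_2)$ over $(x_1,y_1,z_1) \in S_1$ and $(x_2,y_2,z_2) \in S_2$. Then $S_1 \otimes S_2$ is slice-increasing and $|S_1 \otimes S_2| = |S_1| \cdot |S_2|$. -/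
/-- `S ⊆ [l] × [m] × [n]`. -/
def InBox (l m n : ℕ) (S : Finset (ℤ × ℤ × ℤ)) : Prop :=
  ∀ p ∈ S, (1 ≤ p.1 ∧ p.1 ≤ l) ∧ (1 ≤ p.2.1 ∧ p.2.1 ≤ m) ∧ (1 ≤ p.2.2 ∧ p.2.2 ≤ n)

/-- The lexicographic product of two (embedded) sets of triples. -/
def LexProd (l₂ m₂ n₂ : ℕ) (S₁ S₂ : Finset (ℤ × ℤ × ℤ)) : Finset (ℤ × ℤ × ℤ) :=
  (S₁ ×ˢ S₂).image fun p =>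
    ((l₂ : ℤ) * (p.1.1 - 1) + p.2.1,
     (m₂ : ℤ) * (p.1.2.1 - 1) + p.2.2.1,
     (n₂ : ℤ) * (p.1.2.2 - 1) + p.2.2.2)

/-- If `a < a'` and `b, b' ∈ [1, k]`, then `k(a-1)+b < k(a'-1)+b'`. -/
lemma lex_key (k : ℕ) (a b a' b' : ℤ) (hb1 : 1 ≤ b) (hb2 : b ≤ k)
    (hb1' : 1 ≤ b') (hb2' : b' ≤ k) (h : a < a') :
    (k : ℤ) * (a - 1) + b < (k : ℤ) * (a' - 1) + b' := by
  have hk : (0 : ℤ) ≤ k := by positivity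
  nlinarith [mul_le_mul_of_nonneg_left (by linarith : a ≤ a' - 1) hk]

lemma lex_inj (k : ℕ) (a b a' b' : ℤ) (hb1 : 1 ≤ b) (hb2 : b ≤ k)
    (hb1' : 1 ≤ b') (hb2' : b' ≤ k)
    (h : (k : ℤ) * (a - 1) + b = (k : ℤ) * (a' - 1) + b') : a = a' ∧ b = b' := by
  have haa : a = a' := by
    by_contra hne
    rcases lt_or_gt_of_ne hne with hlt | hlt
    · exact absurd h (ne_of_lt (lex_key k a b a' b' hb1 hb2 hb1' hb2' hlt))
    · exact absurd h.symm (ne_of_lt (lex_key k a' b' a b hb1' hb2' hb1 hb2 hlt))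
  subst haa
  exact ⟨rfl, by linarith⟩

theorem stmt_5 (l₁ m₁ n₁ l₂ m₂ n₂ : ℕ) (S₁ S₂ : Finset (ℤ × ℤ × ℤ))
    (h₁ : InBox l₁ m₁ n₁ S₁) (h₂ : InBox l₂ m₂ n₂ S₂)
    (hS₁ : SliceIncZ S₁) (hS₂ : SliceIncZ S₂) :
    SliceIncZ (LexProd l₂ m₂ n₂ S₁ S₂) ∧
      (LexProd l₂ m₂ n₂ S₁ S₂).card = S₁.card * S₂.card := by
  set f : (ℤ × ℤ × ℤ) × (ℤ × ℤ × ℤ) → ℤ × ℤ × ℤ := fun p =>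
    ((l₂ : ℤ) * (p.1.1 - 1) + p.2.1,
     (m₂ : ℤ) * (p.1.2.1 - 1) + p.2.2.1,
     (n₂ : ℤ) * (p.1.2.2 - 1) + p.2.2.2) with hf
  have hinj : ∀ p ∈ S₁ ×ˢ S₂, ∀ q ∈ S₁ ×ˢ S₂, f p = f q → p = q := by
    rintro ⟨⟨a1, a2, a3⟩, ⟨b1, b2, b3⟩⟩ hp ⟨⟨c1, c2, c3⟩, ⟨d1, d2, d3⟩⟩ hq heq
    simp only [Finset.mem_product] at hp hq
    have B1 := (h₂ _ hp.2).1; have B2 := (h₂ _ hp.2).2.1; have B3 := (h₂ _ hp.2).2.2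
    have D1 := (h₂ _ hq.2).1; have D2 := (h₂ _ hq.2).2.1; have D3 := (h₂ _ hq.2).2.2
    simp only [hf, Prod.mk.injEq] at heq
    obtain ⟨e1, e2, e3⟩ := heq
    obtain ⟨g1, g1'⟩ := lex_inj l₂ a1 b1 c1 d1 B1.1 B1.2 D1.1 D1.2 e1
    obtain ⟨g2, g2'⟩ := lex_inj m₂ a2 b2 c2 d2 B2.1 B2.2 D2.1 D2.2 e2
    obtain ⟨g3, g3'⟩ := lex_inj n₂ a3 b3 c3 d3 B3.1 B3.2 D3.1 D3.2 e3
    simp_all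
  constructor
  · rintro P hP Q hQ hPQ
    simp only [LexProd, Finset.mem_image] at hP hQ
    obtain ⟨p, hp, hpP⟩ := hP
    obtain ⟨q, hq, hqQ⟩ := hQ
    obtain ⟨⟨a1, a2, a3⟩, ⟨b1, b2, b3⟩⟩ := p
    obtain ⟨⟨c1, c2, c3⟩, ⟨d1, d2, d3⟩⟩ := q
    simp only [Finset.mem_product] at hp hq
    have B1 := (h₂ _ hp.2).1; have B2 := (h₂ _ hp.2).2.1; have B3 := (h₂ _ hp.2).2.2
    have D1 := (h₂ _ hq.2).1; have D2 := (h₂ _ hq.2).2.1; have D3 := (h₂ _ hq.2).2.2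
    subst hpP; subst hqQ
    -- helper comparisons
    have key1 : a1 < c1 → (l₂:ℤ) * (a1 - 1) + b1 < (l₂:ℤ) * (c1 - 1) + d1 :=
      fun h => lex_key l₂ _ _ _ _ B1.1 B1.2 D1.1 D1.2 h
    have key1' : c1 < a1 → (l₂:ℤ) * (c1 - 1) + d1 < (l₂:ℤ) * (a1 - 1) + b1 :=
      fun h => lex_key l₂ _ _ _ _ D1.1 D1.2 B1.1 B1.2 h
    have key2 : a2 < c2 → (m₂:ℤ) * (a2 - 1) + b2 < (m₂:ℤ) * (c2 - 1) + d2 :=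
      fun h => lex_key m₂ _ _ _ _ B2.1 B2.2 D2.1 D2.2 h
    have key2' : c2 < a2 → (m₂:ℤ) * (c2 - 1) + d2 < (m₂:ℤ) * (a2 - 1) + b2 :=
      fun h => lex_key m₂ _ _ _ _ D2.1 D2.2 B2.1 B2.2 h
    have key3 : a3 < c3 → (n₂:ℤ) * (a3 - 1) + b3 < (n₂:ℤ) * (c3 - 1) + d3 :=
      fun h => lex_key n₂ _ _ _ _ B3.1 B3.2 D3.1 D3.2 h
    have key3' : c3 < a3 → (n₂:ℤ) * (c3 - 1) + d3 < (n₂:ℤ) * (a3 - 1) + b3 :=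
      fun h => lex_key n₂ _ _ _ _ D3.1 D3.2 B3.1 B3.2 h
    by_cases hfst : (a1, a2, a3) = (c1, c2, c3)
    · -- first components equal; use hS₂
      injection hfst with e1 rest; injection rest with e2 e3
      subst e1; subst e2; subst e3
      have hsnd : ((b1, b2, b3) : ℤ × ℤ × ℤ) ≠ (d1, d2, d3) := by
        intro h
        injection h with u rest; injection rest with v w
        subst u; subst v; subst w; exact hPQ rfl
      have := hS₂ _ hp.2 _ hq.2 hsnd
      simp only [hf] at *
      rcases this with ⟨u, v⟩ | ⟨u, v⟩ | ⟨u, v⟩ | ⟨u, v⟩ | ⟨u, v⟩ | ⟨u, v⟩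
      · exact Or.inl ⟨by simpa using u, by simpa using v⟩
      · exact Or.inr (Or.inl ⟨by simpa using u, by simpa using v⟩)
      · exact Or.inr (Or.inr (Or.inl ⟨by simpa using u, by simpa using v⟩))
      · exact Or.inr (Or.inr (Or.inr (Or.inl ⟨by simpa using u, by simpa using v⟩)))
      · exact Or.inr (Or.inr (Or.inr (Or.inr (Or.inl ⟨by simpa using u, by simpa using v⟩))))
      · exact Or.inr (Or.inr (Or.inr (Or.inr (Or.inr ⟨by simpa using u, by simpa using v⟩))))
    · have := hS₁ _ hp.1 _ hq.1 hfst
      simp only [hf]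
      rcases this with ⟨u, v⟩ | ⟨u, v⟩ | ⟨u, v⟩ | ⟨u, v⟩ | ⟨u, v⟩ | ⟨u, v⟩
      · exact Or.inl ⟨key1 u, key2 v⟩
      · exact Or.inr (Or.inl ⟨key1 u, key3 v⟩)
      · exact Or.inr (Or.inr (Or.inl ⟨key2 u, key3 v⟩))
      · exact Or.inr (Or.inr (Or.inr (Or.inl ⟨key1' u, key2' v⟩)))
      · exact Or.inr (Or.inr (Or.inr (Or.inr (Or.inl ⟨key1' u, key3' v⟩))))
      · exact Or.inr (Or.inr (Or.inr (Or.inr (Or.inr ⟨key2' u, key3' v⟩))))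
  · rw [LexProd, Finset.card_image_of_injOn hinj, Finset.card_product]
end

section
/- Let $S_1, S_2 \subseteq \mathbb{Z}^3$ be ordered sets embedded in $[\ell_1]\times[m_1]\times[n_1]$ and $[\ell_2]\times[m_2]\times[n_2]$ respectively. Then their lexicographic product $S_1 \otimes S_2$ is an ordered set. -/
/-- The difference `d` has at least two strictly positive coordinates. -/
def TwoPos (d : ℤ × ℤ × ℤ) : Prop :=
  (0 < d.1 ∧ 0 < d.2.1) ∨ (0 < d.1 ∧ 0 < d.2.2) ∨ (0 < d.2.1 ∧ 0 < d.2.2)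

/-- A finite set of triples is ordered if it can be listed as `L₁, …, L_|S|`
such that for `i < j`, the difference `L j - L i` has at least two strictly
positive coordinates. -/
def IsOrdered (S : Finset (ℤ × ℤ × ℤ)) : Prop :=
  ∃ L : Fin S.card → ℤ × ℤ × ℤ, (∀ i, L i ∈ S) ∧ Function.Injective L ∧
    ∀ i j : Fin S.card, i < j → TwoPos (L j - L i)

lemma box_inj (c x x' u u' : ℤ) (hu : 1 ≤ u) (hu' : u ≤ c) (hv : 1 ≤ u') (hv' : u' ≤ c)
    (h : c*(x-1)+u = c*(x'-1)+u') : x = x' ∧ u = u' := by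
  have hc : (1:ℤ) ≤ c := hu.trans hu'
  have hx : x = x' := by
    rcases lt_trichotomy x x' with h2 | h2 | h2
    · have h3 : c ≤ c*(x'-x) := le_mul_of_one_le_right (by linarith) (by omega)
      nlinarith [h3]
    · exact h2
    · have h3 : c ≤ c*(x-x') := le_mul_of_one_le_right (by linarith) (by omega)
      nlinarith [h3]
  subst hx
  exact ⟨rfl, by linarith⟩

lemma box_pos (c x x' u u' : ℤ) (hu : u ≤ c) (hv : 1 ≤ u') (hv' : u' ≤ c) (hx : x < x') :
    0 < c*(x'-1)+u' - (c*(x-1)+u) := by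
  have hc : (1:ℤ) ≤ c := hv.trans hv'
  have h3 : c ≤ c*(x'-x) := le_mul_of_one_le_right (by linarith) (by omega)
  nlinarith [h3]

theorem stmt_6 (l₁ m₁ n₁ l₂ m₂ n₂ : ℕ) (S₁ S₂ : Finset (ℤ × ℤ × ℤ))
    (h₁ : InBox l₁ m₁ n₁ S₁) (h₂ : InBox l₂ m₂ n₂ S₂)
    (hS₁ : IsOrdered S₁) (hS₂ : IsOrdered S₂) :
    IsOrdered (LexProd l₂ m₂ n₂ S₁ S₂) := by
  obtain ⟨L₁, hL₁mem, hL₁inj, hL₁ord⟩ := hS₁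
  obtain ⟨L₂, hL₂mem, hL₂inj, hL₂ord⟩ := hS₂
  set f : (ℤ×ℤ×ℤ) × (ℤ×ℤ×ℤ) → ℤ×ℤ×ℤ := fun p =>
    ((l₂ : ℤ) * (p.1.1 - 1) + p.2.1,
     (m₂ : ℤ) * (p.1.2.1 - 1) + p.2.2.1,
     (n₂ : ℤ) * (p.1.2.2 - 1) + p.2.2.2) with hf
  have hLP : LexProd l₂ m₂ n₂ S₁ S₂ = (S₁ ×ˢ S₂).image f := rfl
  have hinj : Set.InjOn f (S₁ ×ˢ S₂ : Finset _) := by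
    rintro ⟨p, q⟩ hpq ⟨p', q'⟩ hpq' heq
    simp only [Finset.coe_product, Set.mem_prod, Finset.mem_coe] at hpq hpq'
    obtain ⟨hq1, hq2, hq3⟩ := h₂ q hpq.2
    obtain ⟨hq1', hq2', hq3'⟩ := h₂ q' hpq'.2
    simp only [hf, Prod.mk.injEq] at heq
    obtain ⟨e1, e2, e3⟩ := heq
    obtain ⟨a1, b1⟩ := box_inj _ _ _ _ _ hq1.1 hq1.2 hq1'.1 hq1'.2 e1
    obtain ⟨a2, b2⟩ := box_inj _ _ _ _ _ hq2.1 hq2.2 hq2'.1 hq2'.2 e2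
    obtain ⟨a3, b3⟩ := box_inj _ _ _ _ _ hq3.1 hq3.2 hq3'.1 hq3'.2 e3
    ext <;> simp_all
  have hcard : (LexProd l₂ m₂ n₂ S₁ S₂).card = S₁.card * S₂.card := by
    rw [hLP, Finset.card_image_of_injOn hinj, Finset.card_product]
  by_cases hN : (LexProd l₂ m₂ n₂ S₁ S₂).card = 0
  · exact ⟨fun i => absurd i.isLt (by omega), fun i => absurd i.isLt (by omega),
      fun i => absurd i.isLt (by omega), fun i => absurd i.isLt (by omega)⟩
  · have hb : 0 < S₂.card := by
      rcases Nat.eq_zero_or_pos S₂.card with h | h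
      · rw [h, Nat.mul_zero] at hcard; exact absurd hcard hN
      · exact h
    have hdiv : ∀ k : Fin (LexProd l₂ m₂ n₂ S₁ S₂).card, k / S₂.card < S₁.card := by
      intro k
      exact Nat.div_lt_of_lt_mul (lt_of_lt_of_eq k.isLt (by rw [hcard, Nat.mul_comm]))
    have hmod : ∀ k : Fin (LexProd l₂ m₂ n₂ S₁ S₂).card, k % S₂.card < S₂.card :=
      fun k => Nat.mod_lt _ hb
    have hmem : ∀ (i : Fin S₁.card) (j : Fin S₂.card),
        ((L₁ i, L₂ j) : (ℤ×ℤ×ℤ) × (ℤ×ℤ×ℤ)) ∈ ((S₁ ×ˢ S₂ : Finset _) : Set _) :=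
      fun i j => Finset.mem_coe.mpr (Finset.mem_product.mpr ⟨hL₁mem i, hL₂mem j⟩)
    refine ⟨fun k => f (L₁ ⟨k / S₂.card, hdiv k⟩, L₂ ⟨k % S₂.card, hmod k⟩), ?_, ?_, ?_⟩
    · intro k
      have : f (L₁ ⟨k / S₂.card, hdiv k⟩, L₂ ⟨k % S₂.card, hmod k⟩) ∈
          Finset.image f (S₁ ×ˢ S₂) :=
        Finset.mem_image_of_mem f (Finset.mem_product.mpr ⟨hL₁mem _, hL₂mem _⟩)
      rwa [← hLP] at this
    · intro k k' h
      have := hinj (hmem _ _) (hmem _ _) h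
      have e1 : L₁ ⟨k / S₂.card, hdiv k⟩ = L₁ ⟨k' / S₂.card, hdiv k'⟩ := congrArg Prod.fst this
      have e2 : L₂ ⟨k % S₂.card, hmod k⟩ = L₂ ⟨k' % S₂.card, hmod k'⟩ := congrArg Prod.snd this
      have d1 : (k : ℕ) / S₂.card = (k' : ℕ) / S₂.card := congrArg Fin.val (hL₁inj e1)
      have d2 : (k : ℕ) % S₂.card = (k' : ℕ) % S₂.card := congrArg Fin.val (hL₂inj e2)
      have m1 := Nat.div_add_mod (k : ℕ) S₂.card
      have m2 := Nat.div_add_mod (k' : ℕ) S₂.card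
      have d3 : S₂.card * ((k : ℕ) / S₂.card) = S₂.card * ((k' : ℕ) / S₂.card) := by rw [d1]
      exact Fin.ext (by omega)
    · intro k k' hkk'
      have hkk'' : (k : ℕ) < (k' : ℕ) := hkk'
      have hdle : (k : ℕ) / S₂.card ≤ (k' : ℕ) / S₂.card :=
        Nat.div_le_div_right (le_of_lt hkk'')
      obtain ⟨hq1, hq2, hq3⟩ := h₂ _ (hL₂mem ⟨k % S₂.card, hmod k⟩)
      obtain ⟨hq1', hq2', hq3'⟩ := h₂ _ (hL₂mem ⟨k' % S₂.card, hmod k'⟩)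
      rcases lt_or_eq_of_le hdle with hlt | heq
      · have hord := hL₁ord ⟨k / S₂.card, hdiv k⟩ ⟨k' / S₂.card, hdiv k'⟩ hlt
        simp only [hf, TwoPos, Prod.fst_sub, Prod.snd_sub] at hord ⊢
        rcases hord with ⟨ha1, ha2⟩ | ⟨ha1, ha2⟩ | ⟨ha1, ha2⟩
        · exact Or.inl ⟨box_pos _ _ _ _ _ hq1.2 hq1'.1 hq1'.2 (by omega),
            box_pos _ _ _ _ _ hq2.2 hq2'.1 hq2'.2 (by omega)⟩
        · exact Or.inr (Or.inl ⟨box_pos _ _ _ _ _ hq1.2 hq1'.1 hq1'.2 (by omega),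
            box_pos _ _ _ _ _ hq3.2 hq3'.1 hq3'.2 (by omega)⟩)
        · exact Or.inr (Or.inr ⟨box_pos _ _ _ _ _ hq2.2 hq2'.1 hq2'.2 (by omega),
            box_pos _ _ _ _ _ hq3.2 hq3'.1 hq3'.2 (by omega)⟩)
      · have hjlt : (k : ℕ) % S₂.card < (k' : ℕ) % S₂.card := by
          have m1 := Nat.div_add_mod (k : ℕ) S₂.card
          have m2 := Nat.div_add_mod (k' : ℕ) S₂.card
          have d3 : S₂.card * ((k : ℕ) / S₂.card) = S₂.card * ((k' : ℕ) / S₂.card) := by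
            rw [heq]
          omega
        have hfineq : (⟨k / S₂.card, hdiv k⟩ : Fin S₁.card) = ⟨k' / S₂.card, hdiv k'⟩ :=
          Fin.ext heq
        have hord := hL₂ord ⟨k % S₂.card, hmod k⟩ ⟨k' % S₂.card, hmod k'⟩ hjlt
        simp only [TwoPos, Prod.fst_sub, Prod.snd_sub] at hord
        simp only [hf, hfineq, TwoPos, Prod.fst_sub, Prod.snd_sub]
        rcases hord with ⟨ha1, ha2⟩ | ⟨ha1, ha2⟩ | ⟨ha1, ha2⟩
        · exact Or.inl ⟨by linarith, by linarith⟩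
        · exact Or.inr (Or.inl ⟨by linarith, by linarith⟩)
        · exact Or.inr (Or.inr ⟨by linarith, by linarith⟩)
end

section
/- Let $A, B, C$ be finite sets of reals and let $f: A \times B \to \mathbb{R}$, $g: A \times C \to \mathbb{R}$, $h: B \times C \to \mathbb{R}$ be injective functions that are strictly increasing in each coordinate. Then the image $S$ of the map $A \times B \times C \to \mathbb{R}^3$ given by $(a,b,c) \mapsto (f(a,b), g(a,c), h(b,c))$ is a slice-increasing set of size $|A| \cdot |B| \cdot |C|$. -/
def SliceIncR (S : Set (ℝ × ℝ × ℝ)) : Prop :=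
  ∀ p ∈ S, ∀ q ∈ S, p ≠ q →
    (p.1 < q.1 ∧ p.2.1 < q.2.1) ∨ (p.1 < q.1 ∧ p.2.2 < q.2.2) ∨
    (p.2.1 < q.2.1 ∧ p.2.2 < q.2.2) ∨
    (q.1 < p.1 ∧ q.2.1 < p.2.1) ∨ (q.1 < p.1 ∧ q.2.2 < p.2.2) ∨
    (q.2.1 < p.2.1 ∧ q.2.2 < p.2.2)

theorem stmt_7 (A B C : Finset ℝ) (f g h : ℝ → ℝ → ℝ)
    (hf1 : ∀ a ∈ A, ∀ a' ∈ A, ∀ b ∈ B, a < a' → f a b < f a' b)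
    (hf2 : ∀ a ∈ A, ∀ b ∈ B, ∀ b' ∈ B, b < b' → f a b < f a b')
    (hg1 : ∀ a ∈ A, ∀ a' ∈ A, ∀ c ∈ C, a < a' → g a c < g a' c)
    (hg2 : ∀ a ∈ A, ∀ c ∈ C, ∀ c' ∈ C, c < c' → g a c < g a c')
    (hh1 : ∀ b ∈ B, ∀ b' ∈ B, ∀ c ∈ C, b < b' → h b c < h b' c)
    (hh2 : ∀ b ∈ B, ∀ c ∈ C, ∀ c' ∈ C, c < c' → h b c < h b c')
    (hfinj : ∀ a ∈ A, ∀ b ∈ B, ∀ a' ∈ A, ∀ b' ∈ B, f a b = f a' b' → a = a' ∧ b = b')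
    (hginj : ∀ a ∈ A, ∀ c ∈ C, ∀ a' ∈ A, ∀ c' ∈ C, g a c = g a' c' → a = a' ∧ c = c')
    (hhinj : ∀ b ∈ B, ∀ c ∈ C, ∀ b' ∈ B, ∀ c' ∈ C, h b c = h b' c' → b = b' ∧ c = c') :
    SliceIncR ↑((A ×ˢ B ×ˢ C).image
        fun p => (f p.1 p.2.1, g p.1 p.2.2, h p.2.1 p.2.2)) ∧
      ((A ×ˢ B ×ˢ C).image
        fun p => (f p.1 p.2.1, g p.1 p.2.2, h p.2.1 p.2.2)).card
        = A.card * B.card * C.card := by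
  constructor
  · rintro p hp q hq hpq
    simp only [Finset.coe_image, Set.mem_image, Finset.mem_coe, Finset.mem_product] at hp hq
    obtain ⟨⟨a, b, c⟩, ⟨hA, hB, hC⟩, rfl⟩ := hp
    obtain ⟨⟨a', b', c'⟩, ⟨hA', hB', hC'⟩, rfl⟩ := hq
    simp only [Prod.mk.injEq, ne_eq, not_and] at hpq ⊢
    by_cases hbc : b = b' ∧ c = c'
    · obtain ⟨rfl, rfl⟩ := hbc
      have haa : a ≠ a' := by
        rintro rfl; exact hpq rfl rfl rfl
      rcases haa.lt_or_gt with hl | hl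
      · exact Or.inl ⟨hf1 a hA a' hA' b hB hl, hg1 a hA a' hA' c hC hl⟩
      · exact Or.inr (Or.inr (Or.inr (Or.inl
          ⟨hf1 a' hA' a hA b hB hl, hg1 a' hA' a hA c hC hl⟩)))
    · by_cases hac : a = a' ∧ c = c'
      · obtain ⟨rfl, rfl⟩ := hac
        have hbb : b ≠ b' := by
          rintro rfl; exact hpq rfl rfl rfl
        rcases hbb.lt_or_gt with hl | hl
        · exact Or.inr (Or.inl ⟨hf2 a hA b hB b' hB' hl, hh1 b hB b' hB' c hC hl⟩)
        · exact Or.inr (Or.inr (Or.inr (Or.inr (Or.inl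
            ⟨hf2 a hA b' hB' b hB hl, hh1 b' hB' b hB c hC hl⟩))))
      · by_cases hab : a = a' ∧ b = b'
        · obtain ⟨rfl, rfl⟩ := hab
          have hcc : c ≠ c' := by
            rintro rfl; exact hpq rfl rfl rfl
          rcases hcc.lt_or_gt with hl | hl
          · exact Or.inr (Or.inr (Or.inl
              ⟨hg2 a hA c hC c' hC' hl, hh2 b hB c hC c' hC' hl⟩))
          · exact Or.inr (Or.inr (Or.inr (Or.inr (Or.inr
              ⟨hg2 a hA c' hC' c hC hl, hh2 b hB c' hC' c hC hl⟩))))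
        · have hF : f a b ≠ f a' b' := fun he => hab (hfinj a hA b hB a' hA' b' hB' he)
          have hG : g a c ≠ g a' c' := fun he => hac (hginj a hA c hC a' hA' c' hC' he)
          have hH : h b c ≠ h b' c' := fun he => hbc (hhinj b hB c hC b' hB' c' hC' he)
          rcases hF.lt_or_gt with h1 | h1 <;>
            rcases hG.lt_or_gt with h2 | h2 <;>
              rcases hH.lt_or_gt with h3 | h3 <;>
                first
                | exact Or.inl ⟨h1, h2⟩
                | exact Or.inr (Or.inl ⟨h1, h3⟩)
                | exact Or.inr (Or.inr (Or.inl ⟨h2, h3⟩))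
                | exact Or.inr (Or.inr (Or.inr (Or.inl ⟨h1, h2⟩)))
                | exact Or.inr (Or.inr (Or.inr (Or.inr (Or.inl ⟨h1, h3⟩))))
                | exact Or.inr (Or.inr (Or.inr (Or.inr (Or.inr ⟨h2, h3⟩))))
  · rw [Finset.card_image_of_injOn, Finset.card_product, Finset.card_product, mul_assoc]
    rintro ⟨a, b, c⟩ hm ⟨a', b', c'⟩ hm' heq
    simp only [Finset.mem_coe, Finset.mem_product] at hm hm'
    obtain ⟨hA, hB, hC⟩ := hm
    obtain ⟨hA', hB', hC'⟩ := hm'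
    simp only [Prod.mk.injEq] at heq ⊢
    obtain ⟨hfe, hge, _⟩ := heq
    have h1 := hfinj a hA b hB a' hA' b' hB' hfe
    have h2 := hginj a hA c hC a' hA' c' hC' hge
    exact ⟨h1.1, h1.2, h2.2⟩
end

section
/- A finite set $T \subseteq \mathbb{Z}^3$ is contained in the zero locus of some coordinate-wise strictly increasing function $f: \mathbb{Z}^3 \to \mathbb{R}$ if and only if there do not exist distinct points $p, q \in T$ with $q - p$ coordinate-wise weakly nonnegative (i.e., $q_i \geq p_i$ for all $i = 1,2,3$). -/
/-- `f : ℤ³ → ℝ` is strictly increasing in each coordinate separately. -/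
def CoordStrictMono (f : ℤ × ℤ × ℤ → ℝ) : Prop :=
  (∀ y z : ℤ, StrictMono fun x : ℤ => f (x, y, z)) ∧
  (∀ x z : ℤ, StrictMono fun y : ℤ => f (x, y, z)) ∧
  (∀ x y : ℤ, StrictMono fun z : ℤ => f (x, y, z))

private def s8 (p : ℤ × ℤ × ℤ) : ℤ := p.1 + p.2.1 + p.2.2

theorem stmt_8 (T : Finset (ℤ × ℤ × ℤ)) :
    (∃ f : ℤ × ℤ × ℤ → ℝ, CoordStrictMono f ∧ ∀ p ∈ T, f p = 0) ↔
      ∀ p ∈ T, ∀ q ∈ T, p ≠ q →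
        ¬(p.1 ≤ q.1 ∧ p.2.1 ≤ q.2.1 ∧ p.2.2 ≤ q.2.2) := by
  constructor
  · rintro ⟨f, hf, hz⟩ p hp q hq hne ⟨h1, h2, h3⟩
    have hmono1 := (hf.1 p.2.1 p.2.2).monotone h1
    have hmono2 := (hf.2.1 q.1 p.2.2).monotone h2
    have hmono3 := (hf.2.2 q.1 q.2.1).monotone h3
    have hlt : f p < f q := by
      have hcase : p.1 < q.1 ∨ p.2.1 < q.2.1 ∨ p.2.2 < q.2.2 := by
        by_contra hc
        push_neg at hc
        exact hne (Prod.ext (le_antisymm h1 hc.1)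
          (Prod.ext (le_antisymm h2 hc.2.1) (le_antisymm h3 hc.2.2)))
      rcases hcase with h | h | h
      · calc f p = f (p.1, p.2.1, p.2.2) := rfl
          _ < f (q.1, p.2.1, p.2.2) := hf.1 p.2.1 p.2.2 h
          _ ≤ f (q.1, q.2.1, p.2.2) := hmono2
          _ ≤ f (q.1, q.2.1, q.2.2) := hmono3
          _ = f q := rfl
      · calc f p = f (p.1, p.2.1, p.2.2) := rfl
          _ ≤ f (q.1, p.2.1, p.2.2) := hmono1
          _ < f (q.1, q.2.1, p.2.2) := hf.2.1 q.1 p.2.2 h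
          _ ≤ f (q.1, q.2.1, q.2.2) := hmono3
          _ = f q := rfl
      · calc f p = f (p.1, p.2.1, p.2.2) := rfl
          _ ≤ f (q.1, p.2.1, p.2.2) := hmono1
          _ ≤ f (q.1, q.2.1, p.2.2) := hmono2
          _ < f (q.1, q.2.1, q.2.2) := hf.2.2 q.1 q.2.1 h
          _ = f q := rfl
    rw [hz p hp, hz q hq] at hlt
    exact lt_irrefl _ hlt
  · intro hanti
    -- construct f
    set m : ℤ := -1 - ((T.sup fun p => (s8 p).natAbs : ℕ) : ℤ) with hm_def
    have hm : ∀ p ∈ T, m < -(s8 p) := by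
      intro p hp
      have h1 : (s8 p).natAbs ≤ T.sup fun p => (s8 p).natAbs := Finset.le_sup (f := fun p => (s8 p).natAbs) hp
      have h2 : ((s8 p).natAbs : ℤ) ≤ ((T.sup fun p => (s8 p).natAbs : ℕ) : ℤ) := by
        exact_mod_cast h1
      have h3 : s8 p ≤ ((s8 p).natAbs : ℤ) := Int.le_natAbs
      omega
    set g : ℤ × ℤ × ℤ → ℤ := fun q =>
      m + (((T.filter (fun p => p ≤ q)).sup fun p => (-(s8 p) - m).toNat : ℕ) : ℤ) with hg_def
    have hgmono : ∀ q q' : ℤ × ℤ × ℤ, q ≤ q' → g q ≤ g q' := by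
      intro q q' hqq
      have hsub : T.filter (fun p => p ≤ q) ⊆ T.filter (fun p => p ≤ q') := by
        intro p hp
        simp only [Finset.mem_filter] at hp ⊢
        exact ⟨hp.1, le_trans hp.2 hqq⟩
      have := Finset.sup_mono (f := fun p => (-(s8 p) - m).toNat) hsub
      simp only [hg_def]
      omega
    have hgT : ∀ p ∈ T, g p = -(s8 p) := by
      intro p hp
      have hfilt : T.filter (fun p' => p' ≤ p) = {p} := by
        ext p'
        simp only [Finset.mem_filter, Finset.mem_singleton]
        constructor
        · rintro ⟨hp', hle⟩
          by_contra hne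
          exact hanti p' hp' p hp hne ⟨hle.1, hle.2.1, hle.2.2⟩
        · rintro rfl; exact ⟨hp, le_refl _⟩
      have hnn : 0 ≤ -(s8 p) - m := by have := hm p hp; omega
      simp only [hg_def, hfilt, Finset.sup_singleton]
      rw [Int.toNat_of_nonneg hnn]
      ring
    refine ⟨fun q => ((s8 q + g q : ℤ) : ℝ), ⟨?_, ?_, ?_⟩, ?_⟩
    · intro y z x x' hxx
      have h1 : s8 (x, y, z) < s8 (x', y, z) := by simp only [s8]; omega
      have h2 : g (x, y, z) ≤ g (x', y, z) :=
        hgmono _ _ ⟨le_of_lt hxx, le_refl _, le_refl _⟩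
      show ((s8 (x, y, z) + g (x, y, z) : ℤ) : ℝ) < ((s8 (x', y, z) + g (x', y, z) : ℤ) : ℝ)
      have h3 : s8 (x, y, z) + g (x, y, z) < s8 (x', y, z) + g (x', y, z) := by omega
      exact_mod_cast h3
    · intro x z y y' hyy
      have h1 : s8 (x, y, z) < s8 (x, y', z) := by simp only [s8]; omega
      have h2 : g (x, y, z) ≤ g (x, y', z) :=
        hgmono _ _ ⟨le_refl _, le_of_lt hyy, le_refl _⟩
      show ((s8 (x, y, z) + g (x, y, z) : ℤ) : ℝ) < ((s8 (x, y', z) + g (x, y', z) : ℤ) : ℝ)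
      have h3 : s8 (x, y, z) + g (x, y, z) < s8 (x, y', z) + g (x, y', z) := by omega
      exact_mod_cast h3
    · intro x y z z' hzz
      have h1 : s8 (x, y, z) < s8 (x, y, z') := by simp only [s8]; omega
      have h2 : g (x, y, z) ≤ g (x, y, z') :=
        hgmono _ _ ⟨le_refl _, le_refl _, le_of_lt hzz⟩
      show ((s8 (x, y, z) + g (x, y, z) : ℤ) : ℝ) < ((s8 (x, y, z') + g (x, y, z') : ℤ) : ℝ)
      have h3 : s8 (x, y, z) + g (x, y, z) < s8 (x, y, z') + g (x, y, z') := by omega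
      exact_mod_cast h3
    · intro p hp
      show ((s8 p + g p : ℤ) : ℝ) = 0
      rw [hgT p hp]
      simp
end

section
/- Let $S \subseteq \mathbb{Z}^3$ be a finite slice-increasing set. Then $S$ is ordered if and only if for every three points of $S$, there exists some orientation $\vec{c} \in \{(+,+,-), (+,-,+), (-,+,+)\}$ such that no pair of the three points has a coordinate-wise difference weakly of sign type $\vec{c}$ (where a strict $+$ in $\vec{c}$ is weakened to $\geq 0$ and $-$ to $\leq 0$). -/
/-- `d` is weakly of sign type `(+,+,-)`. -/
def WeakPPM (d : ℤ × ℤ × ℤ) : Prop := 0 ≤ d.1 ∧ 0 ≤ d.2.1 ∧ d.2.2 ≤ 0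

/-- `d` is weakly of sign type `(+,-,+)`. -/
def WeakPMP (d : ℤ × ℤ × ℤ) : Prop := 0 ≤ d.1 ∧ d.2.1 ≤ 0 ∧ 0 ≤ d.2.2

/-- `d` is weakly of sign type `(-,+,+)`. -/
def WeakMPP (d : ℤ × ℤ × ℤ) : Prop := d.1 ≤ 0 ∧ 0 ≤ d.2.1 ∧ 0 ≤ d.2.2

lemma twoPos_asymm (p q : ℤ × ℤ × ℤ) : TwoPos (q - p) → TwoPos (p - q) → False := by
  obtain ⟨a,b,c⟩ := p; obtain ⟨d,e,f⟩ := q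
  simp [TwoPos, Prod.sub_def]; omega

lemma twoPos_ne (p q : ℤ × ℤ × ℤ) (h : TwoPos (q - p)) : p ≠ q := by
  rintro rfl
  obtain ⟨a,b,c⟩ := p
  simp [TwoPos, Prod.sub_def] at h

lemma cycle_contra (d1 d2 d3 : ℤ × ℤ × ℤ) (h1 : TwoPos d1) (h2 : TwoPos d2) (h3 : TwoPos d3)
    (hsum : d1 + d2 + d3 = 0) :
    (WeakPPM d1 ∨ WeakPPM d2 ∨ WeakPPM d3) ∧ (WeakPMP d1 ∨ WeakPMP d2 ∨ WeakPMP d3) ∧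
    (WeakMPP d1 ∨ WeakMPP d2 ∨ WeakMPP d3) := by
  obtain ⟨a,b,c⟩ := d1; obtain ⟨d,e,f⟩ := d2; obtain ⟨g,h,i⟩ := d3
  simp only [TwoPos, WeakPPM, WeakPMP, WeakMPP, Prod.add_def, Prod.mk.injEq, Prod.mk_eq_zero] at *
  omega

lemma triple_avoid (a b c : ℤ × ℤ × ℤ) (h1 : TwoPos (b - a)) (h2 : TwoPos (c - b))
    (h3 : TwoPos (c - a)) :
    (∀ x y : ℤ × ℤ × ℤ, (x = a ∨ x = b ∨ x = c) → (y = a ∨ y = b ∨ y = c) → x ≠ y →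
      ¬WeakPPM (y - x)) ∨
    (∀ x y : ℤ × ℤ × ℤ, (x = a ∨ x = b ∨ x = c) → (y = a ∨ y = b ∨ y = c) → x ≠ y →
      ¬WeakPMP (y - x)) ∨
    (∀ x y : ℤ × ℤ × ℤ, (x = a ∨ x = b ∨ x = c) → (y = a ∨ y = b ∨ y = c) → x ≠ y →
      ¬WeakMPP (y - x)) := by
  have key : (¬WeakPPM (b-a) ∧ ¬WeakPPM (a-b) ∧ ¬WeakPPM (c-b) ∧ ¬WeakPPM (b-c) ∧
      ¬WeakPPM (c-a) ∧ ¬WeakPPM (a-c)) ∨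
      (¬WeakPMP (b-a) ∧ ¬WeakPMP (a-b) ∧ ¬WeakPMP (c-b) ∧ ¬WeakPMP (b-c) ∧
      ¬WeakPMP (c-a) ∧ ¬WeakPMP (a-c)) ∨
      (¬WeakMPP (b-a) ∧ ¬WeakMPP (a-b) ∧ ¬WeakMPP (c-b) ∧ ¬WeakMPP (b-c) ∧
      ¬WeakMPP (c-a) ∧ ¬WeakMPP (a-c)) := by
    obtain ⟨a1,a2,a3⟩ := a; obtain ⟨b1,b2,b3⟩ := b; obtain ⟨c1,c2,c3⟩ := c
    simp only [TwoPos, WeakPPM, WeakPMP, WeakMPP, Prod.sub_def] at *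
    omega
  rcases key with ⟨k1,k2,k3,k4,k5,k6⟩ | ⟨k1,k2,k3,k4,k5,k6⟩ | ⟨k1,k2,k3,k4,k5,k6⟩
  · left; rintro x y (rfl|rfl|rfl) (rfl|rfl|rfl) hxy <;>
      first | exact absurd rfl hxy | assumption
  · right; left; rintro x y (rfl|rfl|rfl) (rfl|rfl|rfl) hxy <;>
      first | exact absurd rfl hxy | assumption
  · right; right; rintro x y (rfl|rfl|rfl) (rfl|rfl|rfl) hxy <;>
      first | exact absurd rfl hxy | assumption

lemma pair_avoid (a b : ℤ × ℤ × ℤ) (h : TwoPos (b - a)) :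
    (∀ x y : ℤ × ℤ × ℤ, (x = a ∨ x = b) → (y = a ∨ y = b) → x ≠ y → ¬WeakPPM (y - x)) ∨
    (∀ x y : ℤ × ℤ × ℤ, (x = a ∨ x = b) → (y = a ∨ y = b) → x ≠ y → ¬WeakPMP (y - x)) ∨
    (∀ x y : ℤ × ℤ × ℤ, (x = a ∨ x = b) → (y = a ∨ y = b) → x ≠ y → ¬WeakMPP (y - x)) := by
  have key : (¬WeakPPM (b-a) ∧ ¬WeakPPM (a-b)) ∨ (¬WeakPMP (b-a) ∧ ¬WeakPMP (a-b)) ∨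
      (¬WeakMPP (b-a) ∧ ¬WeakMPP (a-b)) := by
    obtain ⟨a1,a2,a3⟩ := a; obtain ⟨b1,b2,b3⟩ := b
    simp only [TwoPos, WeakPPM, WeakPMP, WeakMPP, Prod.sub_def] at *
    omega
  rcases key with ⟨k1,k2⟩ | ⟨k1,k2⟩ | ⟨k1,k2⟩
  · left; rintro x y (rfl|rfl) (rfl|rfl) hxy <;> first | exact absurd rfl hxy | assumption
  · right; left; rintro x y (rfl|rfl) (rfl|rfl) hxy <;> first | exact absurd rfl hxy | assumption
  · right; right; rintro x y (rfl|rfl) (rfl|rfl) hxy <;> first | exact absurd rfl hxy | assumption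

lemma slice_total {S : Finset (ℤ × ℤ × ℤ)} (hS : SliceIncZ S) {p q : ℤ × ℤ × ℤ}
    (hp : p ∈ S) (hq : q ∈ S) (hne : p ≠ q) : TwoPos (q - p) ∨ TwoPos (p - q) := by
  have h := hS p hp q hq hne
  obtain ⟨a,b,c⟩ := p; obtain ⟨d,e,f⟩ := q
  simp only [TwoPos, Prod.sub_def] at *
  omega

theorem stmt_9 (S : Finset (ℤ × ℤ × ℤ)) (hS : SliceIncZ S) :
    IsOrdered S ↔
      ∀ p ∈ S, ∀ q ∈ S, ∀ r ∈ S,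
        (∀ a ∈ ({p, q, r} : Set (ℤ × ℤ × ℤ)), ∀ b ∈ ({p, q, r} : Set (ℤ × ℤ × ℤ)),
          a ≠ b → ¬WeakPPM (b - a)) ∨
        (∀ a ∈ ({p, q, r} : Set (ℤ × ℤ × ℤ)), ∀ b ∈ ({p, q, r} : Set (ℤ × ℤ × ℤ)),
          a ≠ b → ¬WeakPMP (b - a)) ∨
        (∀ a ∈ ({p, q, r} : Set (ℤ × ℤ × ℤ)), ∀ b ∈ ({p, q, r} : Set (ℤ × ℤ × ℤ)),
          a ≠ b → ¬WeakMPP (b - a)) := by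
  constructor
  · -- IsOrdered → triple condition
    rintro ⟨L, hmem, hinj, hord⟩ p hp q hq r hr
    -- surjectivity of L onto S
    have hsurj : ∀ x ∈ S, ∃ i, L i = x := by
      intro x hx
      have hbij : Function.Bijective (fun i : Fin S.card => (⟨L i, hmem i⟩ : ↥S)) := by
        rw [Fintype.bijective_iff_injective_and_card]
        exact ⟨fun i j h => hinj (congrArg Subtype.val h), by simp⟩
      obtain ⟨i, hi⟩ := hbij.2 ⟨x, hx⟩
      exact ⟨i, congrArg Subtype.val hi⟩
    suffices h :
        (∀ x y : ℤ × ℤ × ℤ, (x = p ∨ x = q ∨ x = r) → (y = p ∨ y = q ∨ y = r) → x ≠ y →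
          ¬WeakPPM (y - x)) ∨
        (∀ x y : ℤ × ℤ × ℤ, (x = p ∨ x = q ∨ x = r) → (y = p ∨ y = q ∨ y = r) → x ≠ y →
          ¬WeakPMP (y - x)) ∨
        (∀ x y : ℤ × ℤ × ℤ, (x = p ∨ x = q ∨ x = r) → (y = p ∨ y = q ∨ y = r) → x ≠ y →
          ¬WeakMPP (y - x)) by
      have ms : ∀ x : ℤ × ℤ × ℤ, x ∈ ({p, q, r} : Set (ℤ × ℤ × ℤ)) →
          (x = p ∨ x = q ∨ x = r) := by
        intro x hx
        simpa [Set.mem_insert_iff, Set.mem_singleton_iff] using hx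
      rcases h with h|h|h
      · exact Or.inl fun a ha b hb hab => h a b (ms a ha) (ms b hb) hab
      · exact Or.inr (Or.inl fun a ha b hb hab => h a b (ms a ha) (ms b hb) hab)
      · exact Or.inr (Or.inr fun a ha b hb hab => h a b (ms a ha) (ms b hb) hab)
    obtain ⟨i, hi⟩ := hsurj p hp
    obtain ⟨j, hj⟩ := hsurj q hq
    obtain ⟨k, hk⟩ := hsurj r hr
    subst hi hj hk
    -- helper for pair case
    have pairCase : ∀ (a b : ℤ × ℤ × ℤ) (i' j' : Fin S.card), i' < j' → L i' = a → L j' = b →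
        (∀ x : ℤ × ℤ × ℤ, (x = L i ∨ x = L j ∨ x = L k) → (x = a ∨ x = b)) →
        (∀ x y : ℤ × ℤ × ℤ, (x = L i ∨ x = L j ∨ x = L k) → (y = L i ∨ y = L j ∨ y = L k) →
          x ≠ y → ¬WeakPPM (y - x)) ∨
        (∀ x y : ℤ × ℤ × ℤ, (x = L i ∨ x = L j ∨ x = L k) → (y = L i ∨ y = L j ∨ y = L k) →
          x ≠ y → ¬WeakPMP (y - x)) ∨
        (∀ x y : ℤ × ℤ × ℤ, (x = L i ∨ x = L j ∨ x = L k) → (y = L i ∨ y = L j ∨ y = L k) →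
          x ≠ y → ¬WeakMPP (y - x)) := by
      rintro a b i' j' hlt rfl rfl hcov
      rcases pair_avoid (L i') (L j') (hord i' j' hlt) with h|h|h
      · exact Or.inl fun x y hx hy hxy => h x y (hcov x hx) (hcov y hy) hxy
      · exact Or.inr (Or.inl fun x y hx hy hxy => h x y (hcov x hx) (hcov y hy) hxy)
      · exact Or.inr (Or.inr fun x y hx hy hxy => h x y (hcov x hx) (hcov y hy) hxy)
    have tripleCase : ∀ i' j' k' : Fin S.card, i' < j' → j' < k' →
        (∀ x : ℤ × ℤ × ℤ, (x = L i ∨ x = L j ∨ x = L k) →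
          (x = L i' ∨ x = L j' ∨ x = L k')) →
        (∀ x y : ℤ × ℤ × ℤ, (x = L i ∨ x = L j ∨ x = L k) → (y = L i ∨ y = L j ∨ y = L k) →
          x ≠ y → ¬WeakPPM (y - x)) ∨
        (∀ x y : ℤ × ℤ × ℤ, (x = L i ∨ x = L j ∨ x = L k) → (y = L i ∨ y = L j ∨ y = L k) →
          x ≠ y → ¬WeakPMP (y - x)) ∨
        (∀ x y : ℤ × ℤ × ℤ, (x = L i ∨ x = L j ∨ x = L k) → (y = L i ∨ y = L j ∨ y = L k) →
          x ≠ y → ¬WeakMPP (y - x)) := by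
      intro i' j' k' h1 h2 hcov
      rcases triple_avoid (L i') (L j') (L k') (hord i' j' h1) (hord j' k' h2)
          (hord i' k' (h1.trans h2)) with h|h|h
      · exact Or.inl fun x y hx hy hxy => h x y (hcov x hx) (hcov y hy) hxy
      · exact Or.inr (Or.inl fun x y hx hy hxy => h x y (hcov x hx) (hcov y hy) hxy)
      · exact Or.inr (Or.inr fun x y hx hy hxy => h x y (hcov x hx) (hcov y hy) hxy)
    rcases lt_trichotomy i j with hij | hij | hij
    · rcases lt_trichotomy j k with hjk | hjk | hjk
      · exact tripleCase i j k hij hjk (by tauto)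
      · subst hjk; exact pairCase (L i) (L j) i j hij rfl rfl (by tauto)
      · rcases lt_trichotomy i k with hik | hik | hik
        · exact tripleCase i k j hik hjk (by tauto)
        · subst hik; exact pairCase (L i) (L j) i j hij rfl rfl (by tauto)
        · exact tripleCase k i j hik hij (by tauto)
    · subst hij
      rcases lt_trichotomy i k with hik | hik | hik
      · exact pairCase (L i) (L k) i k hik rfl rfl (by tauto)
      · subst hik
        left; rintro x y (rfl|rfl|rfl) (rfl|rfl|rfl) hxy <;> exact absurd rfl hxy
      · exact pairCase (L k) (L i) k i hik rfl rfl (by tauto)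
    · rcases lt_trichotomy i k with hik | hik | hik
      · exact tripleCase j i k hij hik (by tauto)
      · subst hik; exact pairCase (L j) (L i) j i hij rfl rfl (by tauto)
      · rcases lt_trichotomy j k with hjk | hjk | hjk
        · exact tripleCase j k i hjk hik (by tauto)
        · subst hjk; exact pairCase (L j) (L i) j i hij rfl rfl (by tauto)
        · exact tripleCase k j i hjk hij (by tauto)
  · -- triple condition → IsOrdered
    intro hR
    classical
    have trans : ∀ p ∈ S, ∀ q ∈ S, ∀ r ∈ S, TwoPos (q - p) → TwoPos (r - q) →
        TwoPos (r - p) := by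
      intro p hp q hq r hr h1 h2
      have hpq : p ≠ q := twoPos_ne p q h1
      have hqr : q ≠ r := twoPos_ne q r h2
      have hpr : p ≠ r := by rintro rfl; exact twoPos_asymm p q h1 h2
      rcases slice_total hS hp hr hpr with h | h
      · exact h
      · exfalso
        have hsum : (q - p) + (r - q) + (p - r) = 0 := by ring
        have key := cycle_contra _ _ _ h1 h2 h hsum
        have mp : p ∈ ({p, q, r} : Set (ℤ × ℤ × ℤ)) := by simp
        have mq : q ∈ ({p, q, r} : Set (ℤ × ℤ × ℤ)) := by simp
        have mr : r ∈ ({p, q, r} : Set (ℤ × ℤ × ℤ)) := by simp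
        rcases hR p hp q hq r hr with hA | hA | hA
        · rcases key.1 with h' | h' | h'
          · exact hA p mp q mq hpq h'
          · exact hA q mq r mr hqr h'
          · exact hA r mr p mp hpr.symm h'
        · rcases key.2.1 with h' | h' | h'
          · exact hA p mp q mq hpq h'
          · exact hA q mq r mr hqr h'
          · exact hA r mr p mp hpr.symm h'
        · rcases key.2.2 with h' | h' | h'
          · exact hA p mp q mq hpq h'
          · exact hA q mq r mr hqr h'
          · exact hA r mr p mp hpr.symm h'
    set rk : (ℤ × ℤ × ℤ) → ℕ := fun x => (S.filter (fun y => TwoPos (x - y))).card with hrk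
    have notmem_self : ∀ x : ℤ × ℤ × ℤ, x ∉ S.filter (fun y => TwoPos (x - y)) := by
      intro x hx
      rw [Finset.mem_filter] at hx
      exact twoPos_ne x x hx.2 rfl
    have rk_lt : ∀ x ∈ S, rk x < S.card := by
      intro x hx
      apply Finset.card_lt_card
      exact (Finset.ssubset_iff_of_subset (Finset.filter_subset _ _)).2
        ⟨x, hx, notmem_self x⟩
    have rk_mono : ∀ p ∈ S, ∀ q ∈ S, TwoPos (q - p) → rk p < rk q := by
      intro p hp q hq h
      apply Finset.card_lt_card
      refine (Finset.ssubset_iff_of_subset ?_).2 ⟨p, Finset.mem_filter.2 ⟨hp, h⟩,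
        notmem_self p⟩
      intro x hx
      rw [Finset.mem_filter] at hx ⊢
      exact ⟨hx.1, trans x hx.1 p hp q hq hx.2 h⟩
    have hbij : Function.Bijective
        (fun x : ↥S => (⟨rk x, rk_lt x x.2⟩ : Fin S.card)) := by
      rw [Fintype.bijective_iff_injective_and_card]
      refine ⟨?_, by simp⟩
      intro x y hxy
      by_contra hne
      have hne' : (x : ℤ × ℤ × ℤ) ≠ (y : ℤ × ℤ × ℤ) := fun h => hne (Subtype.ext h)
      have heq : rk (x : ℤ × ℤ × ℤ) = rk (y : ℤ × ℤ × ℤ) := congrArg Fin.val hxy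
      rcases slice_total hS x.2 y.2 hne' with h | h
      · exact absurd heq (Nat.ne_of_lt (rk_mono _ x.2 _ y.2 h))
      · exact absurd heq (Nat.ne_of_lt' (rk_mono _ y.2 _ x.2 h))
    set e := Equiv.ofBijective _ hbij with he
    refine ⟨fun i => (e.symm i : ℤ × ℤ × ℤ), fun i => (e.symm i).2, ?_, ?_⟩
    · intro i j hij
      exact e.symm.injective (Subtype.ext hij)
    · intro i j hij
      have hri : rk ((e.symm i : ↥S) : ℤ × ℤ × ℤ) = (i : ℕ) :=
        congrArg Fin.val (e.apply_symm_apply i)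
      have hrj : rk ((e.symm j : ↥S) : ℤ × ℤ × ℤ) = (j : ℕ) :=
        congrArg Fin.val (e.apply_symm_apply j)
      have hne : ((e.symm i : ↥S) : ℤ × ℤ × ℤ) ≠ ((e.symm j : ↥S) : ℤ × ℤ × ℤ) := by
        intro h
        have := e.symm.injective (Subtype.ext h)
        exact absurd (congrArg Fin.val this) (Nat.ne_of_lt hij)
      rcases slice_total hS (e.symm i).2 (e.symm j).2 hne with h | h
      · exact h
      · exfalso
        have := rk_mono _ (e.symm j).2 _ (e.symm i).2 h
        rw [hri, hrj] at this
        exact absurd hij (not_lt.2 (le_of_lt this))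
end

section
/- Let $S \subseteq [n]^3$ be a slice-increasing set with $|S| = \alpha n$ where $\alpha \geq 3$. Then the number of pairs of distinct points $p, q \in S$ with $q - p$ having all three coordinates strictly positive (K-edges) is at least $\frac{1}{64}(\alpha - 1)(\alpha - 3)^2 n$. -/
/-!
In a slice-increasing set every x-slice is a chain ordered by `y` (and then by `z`), and every
y-slice is a chain ordered by `x` (and then by `z`). If `r` lies below `p` in the y-slice of `p`
and `q` lies above `p` in the x-slice of `p`, then `{r, q}` is a K-edge, and it determines
`p = (q.1, r.2.1, _)`; so there are at least `∑ₚ down(p) · up(p)` K-edges. In a chain all but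
`k` elements have at least `k` elements above them, and there are at most `n` slices, so all but
`k₁ n` points have `up ≥ k₁` and all but `k₂ n` have `down ≥ k₂`. Hence at least
`|S| - (k₁ + k₂) n` points contribute `k₁ k₂` each; `k₁ = ⌈(α - 1)/2⌉`, `k₂ = ⌈(α - 3)/4⌉`
give even `(α - 1)(α - 3)² n / 32`.
-/

open Finset

section Chains

variable {β γ δ : Type*} [LinearOrder δ]

theorem card_le_add_card_filter_le_card_lt (T : Finset β) (f : β → δ) (hf : Set.InjOn f T)
    (k : ℕ) : #T ≤ k + #{p ∈ T | k ≤ #{q ∈ T | f p < f q}} := by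
  set above : β → ℕ := fun p => #{q ∈ T | f p < f q}
  have above_lt : ∀ p ∈ T, ∀ p' ∈ T, f p < f p' → above p' < above p := by
    intro p _ p' hp' hlt
    refine card_lt_card ⟨fun q hq => ?_, fun hsub => ?_⟩
    · simp only [mem_filter] at hq ⊢
      exact ⟨hq.1, hlt.trans hq.2⟩
    · simpa using (mem_filter.mp (hsub (mem_filter.mpr ⟨hp', hlt⟩))).2
  have above_inj : Set.InjOn above T := by
    intro p hp p' hp' h
    by_contra hne
    rcases lt_or_gt_of_ne (fun h' => hne (hf hp hp' h')) with hlt | hlt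
    · exact (above_lt p hp p' hp' hlt).ne h.symm
    · exact (above_lt p' hp' p hp hlt).ne h
  have few_low : #{p ∈ T | ¬ k ≤ above p} ≤ #(range k) :=
    card_le_card_of_injOn above (fun p hp => by simpa using (mem_filter.mp hp).2)
      (above_inj.mono (coe_subset.mpr (filter_subset _ _)))
  have := card_filter_add_card_filter_not (s := T) (fun p => k ≤ above p)
  rw [card_range] at few_low
  show #T ≤ k + #{p ∈ T | k ≤ above p}
  omega

theorem card_le_mul_card_image_add [DecidableEq γ] (S : Finset β) (g : β → γ) (f : β → δ)
    (hf : ∀ p ∈ S, ∀ q ∈ S, g p = g q → f p = f q → p = q) (k : ℕ) :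
    #S ≤ k * #(S.image g) + #{p ∈ S | k ≤ #{q ∈ S | g q = g p ∧ f p < f q}} := by
  set good := {p ∈ S | k ≤ #{q ∈ S | g q = g p ∧ f p < f q}} with hgood
  have per_fiber : ∀ c ∈ S.image g, #{p ∈ S | g p = c} ≤ k + #{p ∈ good | g p = c} := by
    intro c _
    have hinj : Set.InjOn f ↑({p ∈ S | g p = c} : Finset β) := by
      intro p hp q hq hpq
      rw [mem_coe, mem_filter] at hp hq
      exact hf p hp.1 q hq.1 (hp.2.trans hq.2.symm) hpq
    convert card_le_add_card_filter_le_card_lt _ f hinj k using 3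
    rw [hgood, filter_filter, filter_filter]
    refine filter_congr fun p _ => ?_
    constructor
    · rintro ⟨hk, rfl⟩
      exact ⟨rfl, by rwa [filter_filter]⟩
    · rintro ⟨rfl, hk⟩
      exact ⟨by rwa [filter_filter] at hk, rfl⟩
  calc #S = ∑ c ∈ S.image g, #{p ∈ S | g p = c} := card_eq_sum_card_image g S
    _ ≤ ∑ c ∈ S.image g, (k + #{p ∈ good | g p = c}) := sum_le_sum per_fiber
    _ = k * #(S.image g) + #good := by
      rw [sum_add_distrib, sum_const, smul_eq_mul, mul_comm,
        ← card_eq_sum_card_fiberwise fun p hp => mem_image_of_mem g (mem_filter.mp hp).1]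

theorem card_image_le_of_forall_mem_Icc {S : Finset β} {f : β → ℤ} {n : ℕ}
    (hf : ∀ p ∈ S, 1 ≤ f p ∧ f p ≤ n) : #(S.image f) ≤ n := by
  simpa using card_le_card (t := Icc (1 : ℤ) n) fun c hc => by
    obtain ⟨p, hp, rfl⟩ := mem_image.mp hc
    exact mem_Icc.mpr (hf p hp)

end Chains

abbrev Pt := ℤ × ℤ × ℤ

def kEdges (S : Finset Pt) : Finset (Pt × Pt) :=
  (S ×ˢ S).filter fun pq => pq.1.1 < pq.2.1 ∧ pq.1.2.1 < pq.2.2.1 ∧ pq.1.2.2 < pq.2.2.2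

def aboveInXSlice (S : Finset Pt) (p : Pt) : Finset Pt := {q ∈ S | q.1 = p.1 ∧ p.2.1 < q.2.1}

def belowInYSlice (S : Finset Pt) (p : Pt) : Finset Pt := {r ∈ S | r.2.1 = p.2.1 ∧ r.1 < p.1}

namespace SliceIncZ

variable {S : Finset Pt} (hS : SliceIncZ S) {p q : Pt}
include hS

theorem eq_of_fst_eq_of_snd_fst_eq (hp : p ∈ S) (hq : q ∈ S) (h1 : p.1 = q.1)
    (h2 : p.2.1 = q.2.1) : p = q := by
  by_contra h
  rcases hS p hp q hq h with ⟨_, _⟩ | ⟨_, _⟩ | ⟨_, _⟩ | ⟨_, _⟩ | ⟨_, _⟩ | ⟨_, _⟩ <;> omega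

theorem lt_of_fst_eq_of_snd_fst_lt (hp : p ∈ S) (hq : q ∈ S) (h1 : p.1 = q.1)
    (h2 : p.2.1 < q.2.1) : p.2.2 < q.2.2 := by
  rcases hS p hp q hq (by rintro rfl; omega) with
    ⟨_, _⟩ | ⟨_, _⟩ | ⟨_, _⟩ | ⟨_, _⟩ | ⟨_, _⟩ | ⟨_, _⟩ <;> omega

theorem lt_of_fst_lt_of_snd_fst_eq (hp : p ∈ S) (hq : q ∈ S) (h1 : p.1 < q.1)
    (h2 : p.2.1 = q.2.1) : p.2.2 < q.2.2 := by
  rcases hS p hp q hq (by rintro rfl; omega) with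
    ⟨_, _⟩ | ⟨_, _⟩ | ⟨_, _⟩ | ⟨_, _⟩ | ⟨_, _⟩ | ⟨_, _⟩ <;> omega

theorem card_le_mul_add_card_aboveInXSlice {n : ℕ} (hSn : InCube n S) (k : ℕ) :
    #S ≤ k * n + #{p ∈ S | k ≤ #(aboveInXSlice S p)} :=
  (card_le_mul_card_image_add S (·.1) (·.2.1)
    (fun _ hp _ hq h1 h2 => hS.eq_of_fst_eq_of_snd_fst_eq hp hq h1 h2) k).trans <|
    Nat.add_le_add_right (Nat.mul_le_mul_left k
      (card_image_le_of_forall_mem_Icc fun p hp => (hSn p hp).1)) _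

theorem card_le_mul_add_card_belowInYSlice {n : ℕ} (hSn : InCube n S) (k : ℕ) :
    #S ≤ k * n + #{p ∈ S | k ≤ #(belowInYSlice S p)} :=
  (card_le_mul_card_image_add S (·.2.1) (fun p => OrderDual.toDual p.1)
    (fun _ hp _ hq h2 h1 => hS.eq_of_fst_eq_of_snd_fst_eq hp hq h1 h2) k).trans <|
    Nat.add_le_add_right (Nat.mul_le_mul_left k
      (card_image_le_of_forall_mem_Icc fun p hp => (hSn p hp).2.1)) _

theorem sum_card_mul_card_le_card_kEdges :
    ∑ p ∈ S, #(belowInYSlice S p) * #(aboveInXSlice S p) ≤ #(kEdges S) := by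
  simp_rw [← card_product]
  rw [← card_sigma]
  refine card_le_card_of_injOn (fun x => x.2) ?_ ?_
  · rintro ⟨p, r, q⟩ h
    simp only [coe_sigma, Set.mem_sigma_iff, coe_product, Set.mem_prod, belowInYSlice,
      aboveInXSlice, coe_filter, Set.mem_ofPred_eq] at h
    obtain ⟨hp, ⟨hr, hry, hrx⟩, ⟨hq, hqx, hqy⟩⟩ := h
    have hrz := hS.lt_of_fst_lt_of_snd_fst_eq hr hp hrx hry
    have hqz := hS.lt_of_fst_eq_of_snd_fst_lt hp hq hqx.symm hqy
    simp only [kEdges, coe_filter, mem_product, Set.mem_ofPred_eq]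
    exact ⟨⟨hr, hq⟩, by omega, by omega, by omega⟩
  · rintro ⟨p, r, q⟩ h ⟨p', r', q'⟩ h' hrq
    obtain ⟨rfl, rfl⟩ := Prod.mk.inj hrq
    simp only [coe_sigma, Set.mem_sigma_iff, coe_product, Set.mem_prod, belowInYSlice,
      aboveInXSlice, coe_filter, Set.mem_ofPred_eq] at h h'
    obtain rfl : p = p' := hS.eq_of_fst_eq_of_snd_fst_eq h.1 h'.1
      (h.2.2.2.1.symm.trans h'.2.2.2.1) (h.2.1.2.1.symm.trans h'.2.1.2.1)
    rfl

theorem mul_sub_le_card_kEdges {n : ℕ} (hSn : InCube n S) (k₁ k₂ : ℕ) :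
    (k₁ * k₂ : ℝ) * (#S - (k₁ + k₂) * n) ≤ #(kEdges S) := by
  set A := {p ∈ S | k₁ ≤ #(aboveInXSlice S p)}
  set B := {p ∈ S | k₂ ≤ #(belowInYSlice S p)}
  have hA := hS.card_le_mul_add_card_aboveInXSlice hSn k₁
  have hB := hS.card_le_mul_add_card_belowInYSlice hSn k₂
  have hAB : #A + #B ≤ #S + #(A ∩ B) := by
    rw [← card_union_add_card_inter]
    gcongr
    exact union_subset (filter_subset _ _) (filter_subset _ _)
  have hedges : k₁ * k₂ * #(A ∩ B) ≤ #(kEdges S) := by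
    refine le_trans ?_ hS.sum_card_mul_card_le_card_kEdges
    calc k₁ * k₂ * #(A ∩ B) = #(A ∩ B) • (k₂ * k₁) := by rw [smul_eq_mul]; ring
      _ ≤ ∑ p ∈ A ∩ B, #(belowInYSlice S p) * #(aboveInXSlice S p) :=
        card_nsmul_le_sum _ _ _ fun p hp => by
          simp only [A, B, mem_inter, mem_filter] at hp
          exact Nat.mul_le_mul hp.2.2 hp.1.2
      _ ≤ _ := sum_le_sum_of_subset (inter_subset_left.trans (filter_subset _ _))
  have hcount : (#S : ℝ) - (k₁ + k₂) * n ≤ #(A ∩ B) := by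
    have hA' : (#S : ℝ) ≤ k₁ * n + #A := by exact_mod_cast hA
    have hB' : (#S : ℝ) ≤ k₂ * n + #B := by exact_mod_cast hB
    have hAB' : (#A + #B : ℝ) ≤ #S + #(A ∩ B) := by exact_mod_cast hAB
    linarith
  calc (k₁ * k₂ : ℝ) * (#S - (k₁ + k₂) * n) ≤ k₁ * k₂ * #(A ∩ B) := by gcongr
    _ ≤ #(kEdges S) := by exact_mod_cast hedges

end SliceIncZ

theorem le_mul_mul_sub_add {α a b : ℝ} (hα : 3 ≤ α) (ha : (α - 1) / 2 ≤ a)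
    (ha' : a < (α - 1) / 2 + 1) (hb : (α - 3) / 4 ≤ b) (hb' : b < (α - 3) / 4 + 1) :
    (α - 1) * (α - 3) ^ 2 / 32 ≤ a * b * (α - (a + b)) :=
  calc (α - 1) * (α - 3) ^ 2 / 32 = (α - 1) / 2 * ((α - 3) / 4) * ((α - 3) / 4) := by ring
    _ ≤ a * b * (α - (a + b)) := by
      have : 0 ≤ a := by linarith
      have : 0 ≤ b := by linarith
      gcongr
      linarith

theorem stmt_15 (n : ℕ) (S : Finset (ℤ × ℤ × ℤ)) (α : ℝ)
    (hSn : InCube n S) (hS : SliceIncZ S)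
    (hcard : (S.card : ℝ) = α * n) (hα : 3 ≤ α) :
    (1 / 64) * (α - 1) * (α - 3) ^ 2 * n ≤
      (((S ×ˢ S).filter fun pq =>
        pq.1.1 < pq.2.1 ∧ pq.1.2.1 < pq.2.2.1 ∧ pq.1.2.2 < pq.2.2.2).card : ℝ) := by
  set a := ⌈(α - 1) / 2⌉₊
  set b := ⌈(α - 3) / 4⌉₊
  have hedges := hS.mul_sub_le_card_kEdges hSn a b
  have harith := le_mul_mul_sub_add hα (Nat.le_ceil _) (Nat.ceil_lt_add_one (by linarith))
    (Nat.le_ceil _) (Nat.ceil_lt_add_one (by linarith))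
  have hpos : 0 ≤ (α - 1) * (α - 3) ^ 2 * n := by
    have : 0 ≤ α - 1 := by linarith
    positivity
  calc (1 / 64) * (α - 1) * (α - 3) ^ 2 * n ≤ (α - 1) * (α - 3) ^ 2 / 32 * n := by linarith
    _ ≤ a * b * (α - (a + b)) * n := by gcongr
    _ = a * b * (#S - (a + b) * n) := by rw [hcard]; ring
    _ ≤ _ := hedges
end

section
/- If for all $N \geq 1$, every 3-coloring of the transitive tournament on $N$ vertices contains a 1-color-avoiding directed path of vertex-length at least $N^{2/3}$, then for every 3-colored transitive tournament on $N$ vertices, the product of the lengths of the longest 1-color-avoiding paths in each of the three 2-color classes is at least $N^2$. -/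
/-!
A colouring `col` of a linear order has all `c`-avoiding paths of at most `L` vertices iff it
admits a rank `f < L` decreasing along every edge not coloured `c` (take `f x + 1` to be the number of
vertices of a longest such path starting at `x`). Ranks multiply under the lexicographic product of
colourings, so in the product of the three rotations `col`, `col + 1`, `col + 2` of a colouring of
`N` vertices, every path avoiding one colour has at most `ℓ₁₂ ℓ₁₃ ℓ₂₃` vertices. The hypothesis
applied to this colouring of `N³` vertices provides such a path with at least `(N³)^{2/3} = N²`
vertices.
-/

variable {α β C D : Type*}

def IsAvoidingPath [Preorder α] (col : α → α → C) (c : C) {k : ℕ} (p : Fin k → α) : Prop :=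
  StrictMono p ∧ ∀ (t : ℕ) (h : t + 1 < k), col (p ⟨t, Nat.lt_of_succ_lt h⟩) (p ⟨t + 1, h⟩) ≠ c

structure IsAvoidingRank [Preorder α] (col : α → α → C) (c : C) (L : ℕ) (f : α → ℕ) : Prop where
  lt_bound : ∀ x, f x < L
  lt_of_edge : ∀ ⦃x y⦄, x < y → col x y ≠ c → f y < f x

section Path

variable [Preorder α] {col : α → α → C} {c : C}

theorem isAvoidingPath_succ_iff {k : ℕ} {p : Fin (k + 1) → α} :
    IsAvoidingPath col c p ↔
      ∀ t : Fin k, p t.castSucc < p t.succ ∧ col (p t.castSucc) (p t.succ) ≠ c := by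
  simp only [IsAvoidingPath, Fin.strictMono_iff_lt_succ, forall_and]
  exact and_congr_right fun _ => ⟨fun h t => h t (Nat.succ_lt_succ t.isLt),
    fun h t ht => h ⟨t, Nat.succ_lt_succ_iff.mp ht⟩⟩

theorem IsAvoidingPath.cons {k : ℕ} {p : Fin (k + 1) → α} (hp : IsAvoidingPath col c p) {x : α}
    (hx : x < p 0) (hxc : col x (p 0) ≠ c) :
    IsAvoidingPath col c (Fin.cons x p : Fin (k + 2) → α) := by
  rw [isAvoidingPath_succ_iff] at hp ⊢
  intro t
  cases t using Fin.cases with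
  | zero => exact ⟨hx, hxc⟩
  | succ t => simpa only [Fin.cons_succ, ← Fin.succ_castSucc] using hp t

theorem IsAvoidingRank.length_le {L : ℕ} {f : α → ℕ} (hf : IsAvoidingRank col c L f) {k : ℕ}
    {p : Fin k → α} (hp : IsAvoidingPath col c p) : k ≤ L := by
  have hanti : StrictAnti (f ∘ p) := by
    cases k with
    | zero => exact fun t => t.elim0
    | succ k =>
      rw [Fin.strictAnti_iff_succ_lt]
      exact fun t => hf.lt_of_edge (isAvoidingPath_succ_iff.mp hp t).1
        (isAvoidingPath_succ_iff.mp hp t).2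
  simpa using Fintype.card_le_of_injective (fun t => (⟨f (p t), hf.lt_bound _⟩ : Fin L))
    fun s t hst => hanti.injective (Fin.mk.inj hst)

theorem exists_isAvoidingRank {L : ℕ}
    (hL : ∀ (k : ℕ) (p : Fin k → α), IsAvoidingPath col c p → k ≤ L) :
    ∃ f, IsAvoidingRank col c L f := by
  let lengthsFrom (x : α) : Set ℕ :=
    {k | ∃ p : Fin (k + 1) → α, p 0 = x ∧ IsAvoidingPath col c p}
  have hbdd (x : α) : BddAbove (lengthsFrom x) :=
    ⟨L, fun k ⟨p, _, hp⟩ => by have := hL _ p hp; omega⟩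
  have hne (x : α) : (lengthsFrom x).Nonempty :=
    ⟨0, fun _ => x, rfl, Subsingleton.strictMono (α := Fin 1) _, fun _ h => by omega⟩
  refine ⟨fun x => sSup (lengthsFrom x), fun x => ?_, fun x y hxy hc => ?_⟩
  · obtain ⟨p, -, hp⟩ := Nat.sSup_mem (hne x) (hbdd x)
    have := hL _ p hp
    omega
  · obtain ⟨p, hp0, hp⟩ := Nat.sSup_mem (hne y) (hbdd y)
    exact Nat.lt_of_succ_le (le_csSup (hbdd x) ⟨_, rfl, hp.cons (hp0.symm ▸ hxy) (hp0.symm ▸ hc)⟩)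

end Path

section Rank

variable [Preorder α] [Preorder β] {col : α → α → C} {c : C} {L : ℕ} {f : α → ℕ}

theorem IsAvoidingRank.map (g : C → D) (hf : IsAvoidingRank col c L f) :
    IsAvoidingRank (fun x y => g (col x y)) (g c) L f :=
  ⟨hf.lt_bound, fun _ _ hxy hc => hf.lt_of_edge hxy (hc ∘ congrArg g)⟩

theorem IsAvoidingRank.comp_orderEmbedding (hf : IsAvoidingRank col c L f) (e : β ↪o α) :
    IsAvoidingRank (fun x y => col (e x) (e y)) c L (f ∘ e) :=
  ⟨fun _ => hf.lt_bound _, fun _ _ hxy hc => hf.lt_of_edge (e.lt_iff_lt.mpr hxy) hc⟩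

end Rank

def lexCol [DecidableEq α] (col₁ : α → α → C) (col₂ : β → β → C) (x y : α ×ₗ β) : C :=
  if (ofLex x).1 = (ofLex y).1 then col₂ (ofLex x).2 (ofLex y).2 else col₁ (ofLex x).1 (ofLex y).1

theorem IsAvoidingRank.lexCol [DecidableEq α] [Preorder α] [Preorder β]
    {col₁ : α → α → C} {col₂ : β → β → C} {c : C} {L₁ L₂ : ℕ} {f₁ : α → ℕ} {f₂ : β → ℕ}
    (h₁ : IsAvoidingRank col₁ c L₁ f₁) (h₂ : IsAvoidingRank col₂ c L₂ f₂) :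
    IsAvoidingRank (lexCol col₁ col₂) c (L₁ * L₂)
      (fun x => f₁ (ofLex x).1 * L₂ + f₂ (ofLex x).2) := by
  constructor
  · intro x
    nlinarith [h₁.lt_bound (ofLex x).1, h₂.lt_bound (ofLex x).2]
  · intro x y hxy hc
    unfold _root_.lexCol at hc
    rcases Prod.Lex.lt_iff.mp hxy with hlt | ⟨heq, hlt⟩
    · rw [if_neg hlt.ne] at hc
      nlinarith [h₁.lt_of_edge hlt hc, h₂.lt_bound (ofLex y).2]
    · rw [if_pos heq] at hc
      rw [heq]
      linarith [h₂.lt_of_edge hlt hc]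

theorem stmt_19
    (H : ∀ (N : ℕ) (col : Fin N → Fin N → Fin 3),
      ∃ a b : Fin 3, a ≠ b ∧ ∃ (k : ℕ) (i : Fin k → Fin N),
        (N : ℝ) ^ ((2 : ℝ) / 3) ≤ (k : ℝ) ∧ StrictMono i ∧
        ∀ (t : ℕ) (h : t + 1 < k),
          col (i ⟨t, Nat.lt_of_succ_lt h⟩) (i ⟨t + 1, h⟩) ∈ ({a, b} : Set (Fin 3))) :
    ∀ (N : ℕ) (col : Fin N → Fin N → Fin 3) (l : Fin 3 → ℕ),
      (∀ c : Fin 3, IsGreatest {k : ℕ | ∃ i : Fin k → Fin N, StrictMono i ∧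
        ∀ (t : ℕ) (h : t + 1 < k),
          col (i ⟨t, Nat.lt_of_succ_lt h⟩) (i ⟨t + 1, h⟩) ≠ c} (l c)) →
      N ^ 2 ≤ l 0 * l 1 * l 2 := by
  intro N col l hl
  have hrank (j c : Fin 3) : ∃ f, IsAvoidingRank (fun x y => col x y + j) c (l (c - j)) f := by
    obtain ⟨f, hf⟩ := exists_isAvoidingRank fun k p hp => (hl (c - j)).2 ⟨p, hp⟩
    exact ⟨f, by simpa using hf.map (· + j)⟩
  let e : Fin (N ^ 3) ≃o Fin N ×ₗ Fin N ×ₗ Fin N :=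
    Fintype.orderIsoFinOfCardEq _ (by simp [Fintype.card_lex]; ring)
  obtain ⟨a, b, -, k, p, hk, hp, hpab⟩ := H (N ^ 3) fun x y =>
    lexCol (fun x y => col x y + 0) (lexCol (fun x y => col x y + 1) (fun x y => col x y + 2))
      (e x) (e y)
  obtain ⟨c, hca, hcb⟩ : ∃ c : Fin 3, c ≠ a ∧ c ≠ b := by
    have : ∀ a b : Fin 3, ∃ c, c ≠ a ∧ c ≠ b := by decide
    exact this a b
  obtain ⟨f₀, h₀⟩ := hrank 0 c
  obtain ⟨f₁, h₁⟩ := hrank 1 c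
  obtain ⟨f₂, h₂⟩ := hrank 2 c
  have hkl : k ≤ l (c - 0) * (l (c - 1) * l (c - 2)) :=
    ((h₀.lexCol (h₁.lexCol h₂)).comp_orderEmbedding e.toOrderEmbedding).length_le
      ⟨hp, fun t ht hc => (hpab t ht).elim (hca <| hc.symm.trans ·) (hcb <| hc.symm.trans ·)⟩
  have hprod : l (c - 0) * (l (c - 1) * l (c - 2)) = l 0 * l 1 * l 2 := by
    fin_cases c <;> dsimp <;> ring
  have hpow : ((N ^ 3 : ℕ) : ℝ) ^ ((2 : ℝ) / 3) = (N : ℝ) ^ 2 := by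
    rw [Nat.cast_pow, ← Real.rpow_natCast, ← Real.rpow_mul (Nat.cast_nonneg N)]
    norm_num
  rw [hpow, ← Nat.cast_pow] at hk
  exact hprod ▸ (Nat.cast_le.mp hk).trans hkl
end
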